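/- arXiv:1906.06931 — 6 statements merged into one kernel-verified Lean document; each statement's English description precedes it below -/
import Mathlib

section
/- Let M = (S, s₀, A, Av, Δ) be a finite MDP and ε > 0. A set C ⊆ S is an ε-core of M if and only if for every subset of states R ⊆ S it holds that 0 ≤ P^max[Reach R] − P^max[Reach (R ∩ C) ∩ Stay C] < ε. -/
open MeasureTheory

/-- A Markov decision process: an initial state, a non-empty finite set of available
actions at each state, and for each state and action a distribution over successors. -/
structure MDP (S : Type*) (A : Type*) where
  init : S
  avail : S → Finset A
  avail_nonempty : ∀ s, (avail s).Nonempty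
  trans : S → A → PMF S

/-- The space of infinite paths `s₀ a₀ s₁ a₁ ⋯`; coordinate `i` is the pair `(sᵢ, aᵢ)`. -/
def Traj (S : Type*) (A : Type*) := ℕ → S × A

instance {S A : Type*} : MeasurableSpace (Traj S A) :=
  @MeasurableSpace.pi ℕ (fun _ => S × A) (fun _ => ⊤)

/-- A strategy: to each finite history `s₀ a₀ … s_{k-1} a_{k-1}` and current state `s_k` it
assigns a probability distribution over the actions available at `s_k`. -/
structure Strategy {S A : Type*} (M : MDP S A) where
  act : List (S × A) → S → PMF A
  mem_avail : ∀ h s a, a ∈ (act h s).support → a ∈ M.avail s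

variable {S A : Type*}

/-- The probability, starting in state `s` after history `h`, that the path continues with
exactly the finite sequence `pre` of (state, action) pairs. -/
noncomputable def cylProb [DecidableEq S] (M : MDP S A) (σ : Strategy M) :
    List (S × A) → S → List (S × A) → ENNReal
  | _, _, [] => 1
  | h, s, (t, a) :: rest =>
      (if t = s then (σ.act h s) a else 0) *
        ∑' s' : S, (M.trans s a) s' * cylProb M σ (h ++ [(t, a)]) s' rest

/-- The cylinder set of all infinite paths whose first coordinates agree with `pre`. -/
def Cyl (pre : List (S × A)) : Set (Traj S A) :=
  {ω | ∀ i : Fin pre.length, ω i = pre.get i}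

/-- `P` is the family of path measures induced (via the Ionescu–Tulcea construction) by the
strategies and start states of `M`: each `P σ s` is a probability measure on infinite paths
whose value on every cylinder is the product of strategy- and transition-probabilities. -/
def IsPathMeasure [DecidableEq S] (M : MDP S A)
    (P : Strategy M → S → Measure (Traj S A)) : Prop :=
  (∀ σ s, IsProbabilityMeasure (P σ s)) ∧
    ∀ σ s pre, P σ s (Cyl pre) = cylProb M σ [] s pre

/-- `P^max_s[E]`, the supremum over all strategies of the probability of `E`. -/
noncomputable def pmax (M : MDP S A) (P : Strategy M → S → Measure (Traj S A))
    (s : S) (E : Set (Traj S A)) : ENNReal :=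
  ⨆ σ : Strategy M, P σ s E

/-- `P^min_s[E]`, the infimum over all strategies of the probability of `E`. -/
noncomputable def pmin (M : MDP S A) (P : Strategy M → S → Measure (Traj S A))
    (s : S) (E : Set (Traj S A)) : ENNReal :=
  ⨅ σ : Strategy M, P σ s E

/-- The set of paths that visit `R` at some point. -/
def Reach (R : Set S) : Set (Traj S A) := {ω | ∃ i, (ω i).1 ∈ R}

/-- The set of paths that stay in `C` forever. -/
def Stay (C : Set S) : Set (Traj S A) := {ω | ∀ i, (ω i).1 ∈ C}

/-- The set of paths that visit `R` within the first `n` steps. -/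
def ReachN (n : ℕ) (R : Set S) : Set (Traj S A) := {ω | ∃ i ≤ n, (ω i).1 ∈ R}

/-- The set of paths that stay in `C` for the first `n` steps. -/
def StayN (n : ℕ) (C : Set S) : Set (Traj S A) := {ω | ∀ i ≤ n, (ω i).1 ∈ C}

/-- `C` is an `ε`-core: the maximal probability of ever leaving `C` is `< ε`. -/
def IsCore [DecidableEq S] (M : MDP S A) (P : Strategy M → S → Measure (Traj S A))
    (ε : ℝ) (C : Set S) : Prop :=
  pmax M P M.init (Reach Cᶜ) < ENNReal.ofReal ε

/-- `C` is an `n`-step `ε`-core: the maximal probability of leaving `C` within `n` steps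
is `< ε`. -/
def IsNCore [DecidableEq S] (M : MDP S A) (P : Strategy M → S → Measure (Traj S A))
    (n : ℕ) (ε : ℝ) (C : Set S) : Prop :=
  pmax M P M.init (ReachN n Cᶜ) < ENNReal.ofReal ε

/-- A set `C ⊆ S` is an `ε`-core of the finite MDP `M` if and only if for
every subset of states `R ⊆ S` we have
`0 ≤ P^max[Reach R] − P^max[Reach (R ∩ C) ∩ Stay C] < ε`. -/
theorem core_characterization {S A : Type*} [Fintype S] [Fintype A] [DecidableEq S]
    (M : MDP S A) (ε : ℝ) (hε : 0 < ε)
    (P : Strategy M → S → Measure (Traj S A)) (hP : IsPathMeasure M P) (C : Set S) :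
    IsCore M P ε C ↔
      ∀ R : Set S,
        0 ≤ (pmax M P M.init (Reach R)).toReal -
              (pmax M P M.init (Reach (R ∩ C) ∩ Stay C)).toReal ∧
          (pmax M P M.init (Reach R)).toReal -
              (pmax M P M.init (Reach (R ∩ C) ∩ Stay C)).toReal < ε := by
  have hle1 : ∀ σ s E, P σ s E ≤ 1 := fun σ s E => by
    haveI := hP.1 σ s; exact prob_le_one
  have hpmax_le1 : ∀ E, pmax M P M.init E ≤ 1 := fun E =>
    iSup_le fun σ => hle1 σ _ E
  have hne : ∀ E, pmax M P M.init E ≠ ⊤ := fun E =>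
    ((hpmax_le1 E).trans_lt ENNReal.one_lt_top).ne
  constructor
  · intro hcore R
    set a := pmax M P M.init (Reach R) with ha
    set b := pmax M P M.init (Reach (R ∩ C) ∩ Stay C) with hb
    set c := pmax M P M.init (Reach Cᶜ) with hc
    have hsub : Reach (R ∩ C) ∩ Stay C ⊆ (Reach R : Set (Traj S A)) := by
      rintro ω ⟨⟨i, hi⟩, _⟩; exact ⟨i, hi.1⟩
    have hba : b ≤ a := iSup_mono fun σ => measure_mono hsub
    have hcover : (Reach R : Set (Traj S A)) ⊆ (Reach (R ∩ C) ∩ Stay C) ∪ Reach Cᶜ := by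
      rintro ω ⟨i, hi⟩
      by_cases hstay : ∀ j, (ω j).1 ∈ C
      · exact Or.inl ⟨⟨i, hi, hstay i⟩, hstay⟩
      · push_neg at hstay
        obtain ⟨j, hj⟩ := hstay
        exact Or.inr ⟨j, hj⟩
    have habc : a ≤ b + c := by
      refine iSup_le fun σ => ?_
      calc P σ M.init (Reach R) ≤ P σ M.init ((Reach (R ∩ C) ∩ Stay C) ∪ Reach Cᶜ) :=
            measure_mono hcover
        _ ≤ P σ M.init (Reach (R ∩ C) ∩ Stay C) + P σ M.init (Reach Cᶜ) :=
            measure_union_le _ _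
        _ ≤ b + c := add_le_add (le_iSup (fun σ => P σ M.init _) σ)
            (le_iSup (fun σ => P σ M.init _) σ)
    have h1 : b.toReal ≤ a.toReal := ENNReal.toReal_mono (hne _) hba
    have h2 : a.toReal ≤ b.toReal + c.toReal := by
      have := ENNReal.toReal_mono (by
        exact ENNReal.add_ne_top.2 ⟨hne _, hne _⟩) habc
      rwa [ENNReal.toReal_add (hne _) (hne _)] at this
    have h3 : c.toReal < ε := ENNReal.toReal_lt_of_lt_ofReal hcore
    constructor <;> linarith
  · intro h
    have h1 := h Cᶜ
    have hemp : (Reach (Cᶜ ∩ C) ∩ Stay C : Set (Traj S A)) = ∅ := by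
      rw [Set.compl_inter_self]
      ext ω
      simp [Reach]
    rw [hemp] at h1
    have hz : pmax M P M.init (∅ : Set (Traj S A)) = 0 := by
      simp [pmax]
    rw [hz] at h1
    simp only [ENNReal.toReal_zero, sub_zero] at h1
    exact (ENNReal.lt_ofReal_iff_toReal_lt (hne _)).2 h1.2
end

section
/- Consider the MDP M with states S = {s₀, s₁, s₂, s₃, u}, initial state s₀, where Av(s₀) = {a, b} with Δ(s₀,a) = 0.8·δ_{s₁} + 0.2·δ_{s₂} and Δ(s₀,b) = 0.3·δ_{s₃} + 0.7·δ_u, where each of s₁, s₂, s₃ has a single available action looping to itself with probability 1, and where u has a single available action leading to s₁ with probability 1. Let C = {s₀, s₁, s₂, s₃} and R = {s₁}. Then P^max[Reach R] = P^max[Reach (R ∩ C) ∩ Stay C] = 0.8, while P^max[Reach (S \ C)] = 0.7. In particular, for every ε with 0 < ε ≤ 0.7 there exist an MDP M, a set C containing the initial state that is not an ε-core of M, and a set R ⊆ C such that the reachability value P^max[Reach R] is computed exactly by restricting to C, i.e., P^max[Reach R] = P^max[Reach (R ∩ C) ∩ Stay C]. -/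
open MeasureTheory

variable {S A : Type*}

/-- The five states of the counterexample MDP. -/
inductive St where
  | s0 | s1 | s2 | s3 | u
  deriving DecidableEq

instance : Fintype St :=
  ⟨{St.s0, St.s1, St.s2, St.s3, St.u}, by intro x; cases x <;> simp⟩

/-- The actions of the counterexample MDP. -/
inductive Ac where
  | a | b | loop
  deriving DecidableEq

instance : Fintype Ac :=
  ⟨{Ac.a, Ac.b, Ac.loop}, by intro x; cases x <;> simp⟩

/-- The counterexample MDP: `Av(s₀) = {a, b}`, `Δ(s₀,a) = 0.8·δ_{s₁} + 0.2·δ_{s₂}`,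
`Δ(s₀,b) = 0.3·δ_{s₃} + 0.7·δ_u`; `s₁`, `s₂`, `s₃` loop to themselves with probability `1`
and `u` leads to `s₁` with probability `1`. -/
noncomputable def exM : MDP St Ac where
  init := St.s0
  avail := fun s =>
    match s with
    | St.s0 => {Ac.a, Ac.b}
    | _ => {Ac.loop}
  avail_nonempty := by intro s; cases s <;> simp
  trans := fun s act =>
    match s, act with
    | St.s0, Ac.a => PMF.ofMultiset {St.s1, St.s1, St.s1, St.s1, St.s2} (by decide)
    | St.s0, Ac.b =>
        PMF.ofMultiset
          {St.s3, St.s3, St.s3, St.u, St.u, St.u, St.u, St.u, St.u, St.u} (by decide)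
    | St.u, _ => PMF.pure St.s1
    | s, _ => PMF.pure s

/-!
In `s₀` every strategy plays `a` or `b`, almost every path follows transitions of positive
probability, and `s₁`, `s₂`, `s₃` are absorbing. Hence the first step decides everything:
`s₁` is reached iff the first step goes to `s₁` or `u` (probability `0.8` under `a`, `0.7`
under `b`), and `C` is left iff it goes to `u` (probability `0` under `a`, `0.7` under `b`).
Playing `a` attains `0.8` without ever leaving `C`, playing `b` leaves `C` with probability
`0.7`.
-/

open scoped ENNReal

namespace MDP

variable {S A : Type*} (M : MDP S A)

structure IsRun (s : S) (ω : Traj S A) : Prop where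
  head : (ω 0).1 = s
  avail : ∀ n, (ω n).2 ∈ M.avail (ω n).1
  trans_ne_zero : ∀ n, M.trans (ω n).1 (ω n).2 (ω (n + 1)).1 ≠ 0

def IsClosed (K : Set S) : Prop :=
  ∀ s ∈ K, ∀ a ∈ M.avail s, ∀ t, M.trans s a t ≠ 0 → t ∈ K

variable {M}

theorem IsRun.mem_of_isClosed {s : S} {ω : Traj S A} {K : Set S} {m n : ℕ}
    (hω : M.IsRun s ω) (hK : M.IsClosed K) (hm : (ω m).1 ∈ K) (hmn : m ≤ n) :
    (ω n).1 ∈ K := by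
  induction n, hmn using Nat.le_induction with
  | base => exact hm
  | succ n _ ih => exact hK _ ih _ (hω.avail n) _ (hω.trans_ne_zero n)

theorem IsRun.notMem_reach_of_isClosed {s : S} {ω : Traj S A} {K R : Set S}
    (hω : M.IsRun s ω) (hK : M.IsClosed K) (h1 : (ω 1).1 ∈ K) (hs : s ∉ R)
    (hKR : Disjoint K R) : ω ∉ Reach R := by
  rintro ⟨_ | i, hi⟩
  · exact hs (hω.head ▸ hi)
  · exact hKR.notMem_of_mem_left (hω.mem_of_isClosed hK h1 (Nat.le_add_left 1 i)) hi

noncomputable def memorylessStrategy (f : S → A) (hf : ∀ s, f s ∈ M.avail s) :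
    Strategy M where
  act _ s := PMF.pure (f s)
  mem_avail h s a ha := by
    rw [PMF.support_pure, Set.mem_singleton_iff] at ha
    exact ha ▸ hf s

end MDP

def Traj.prefix {S A : Type*} (ω : Traj S A) (n : ℕ) : List (S × A) :=
  List.ofFn fun i : Fin n => ω i

theorem Traj.mem_cyl_prefix {S A : Type*} (ω : Traj S A) (n : ℕ) : ω ∈ Cyl (ω.prefix n) := by
  rintro ⟨i, hi⟩
  show ω i = (ω.prefix n)[i]
  simp [Traj.prefix]

theorem Traj.prefix_succ {S A : Type*} (ω : Traj S A) (n : ℕ) :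
    ω.prefix (n + 1) = ω 0 :: Traj.prefix (fun i => ω (i + 1)) n :=
  List.ofFn_succ

theorem reach_inter_stay_subset_reach {S A : Type*} (R C : Set S) :
    (Reach (R ∩ C) ∩ Stay C : Set (Traj S A)) ⊆ Reach R :=
  fun _ ⟨⟨i, hi⟩, _⟩ => ⟨i, hi.1⟩

theorem mem_cyl_pair {S A : Type*} {ω : Traj S A} {x y : S × A} :
    ω ∈ Cyl [x, y] ↔ ω 0 = x ∧ ω 1 = y := by
  simp [Cyl, Fin.forall_fin_two]

section PathMeasure

variable {S A : Type*} [DecidableEq S] {M : MDP S A}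

theorem cylProb_pair (σ : Strategy M) (s t : S) (a b : A) :
    cylProb M σ [] s [(s, a), (t, b)] = σ.act [] s a * (M.trans s a t * σ.act [(s, a)] t b) := by
  simp [cylProb, mul_comm]

theorem cylProb_cons_ne_zero {σ : Strategy M} {h : List (S × A)} {s : S} {x : S × A}
    {rest : List (S × A)} (hne : cylProb M σ h s (x :: rest) ≠ 0) :
    x.1 = s ∧ x.2 ∈ M.avail s ∧
      ∃ t, M.trans s x.2 t ≠ 0 ∧ cylProb M σ (h ++ [x]) t rest ≠ 0 := by
  obtain ⟨t, a⟩ := x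
  simp only [cylProb, ne_eq, mul_eq_zero, ite_eq_right_iff, not_or, Classical.not_imp,
    ENNReal.tsum_eq_zero, not_forall] at hne
  obtain ⟨⟨rfl, hσ⟩, t', ht'⟩ := hne
  exact ⟨rfl, σ.mem_avail h t a ((PMF.mem_support_iff _ _).2 hσ), t', ht'⟩

theorem cylProb_prefix_ne_zero (σ : Strategy M) :
    ∀ {n : ℕ} {h : List (S × A)} {s : S} {ω : Traj S A},
      cylProb M σ h s (ω.prefix (n + 1)) ≠ 0 →
        (ω 0).1 = s ∧ ∀ j < n, (ω j).2 ∈ M.avail (ω j).1 ∧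
          M.trans (ω j).1 (ω j).2 (ω (j + 1)).1 ≠ 0
  | 0, _, _, ω, hne => by
    rw [Traj.prefix_succ] at hne
    exact ⟨(cylProb_cons_ne_zero hne).1, fun j hj => absurd hj (Nat.not_lt_zero j)⟩
  | n + 1, _, _, ω, hne => by
    rw [Traj.prefix_succ] at hne
    obtain ⟨rfl, havail, t, ht, hrest⟩ := cylProb_cons_ne_zero hne
    obtain ⟨rfl, hsteps⟩ := cylProb_prefix_ne_zero σ hrest
    refine ⟨rfl, fun j hj => ?_⟩
    cases j with
    | zero => exact ⟨havail, ht⟩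
    | succ j => exact hsteps j (by omega)

variable {P : Strategy M → S → Measure (Traj S A)}

theorem IsPathMeasure.measure_cyl_pair (hP : IsPathMeasure M P) (σ : Strategy M) (s t : S)
    (a b : A) : P σ s (Cyl [(s, a), (t, b)]) =
      σ.act [] s a * (M.trans s a t * σ.act [(s, a)] t b) :=
  (hP.2 σ s _).trans (cylProb_pair σ s t a b)

variable [Countable S] [Countable A]

theorem IsPathMeasure.ae_cylProb_prefix_ne_zero (hP : IsPathMeasure M P) (σ : Strategy M)
    (s : S) : ∀ᵐ ω ∂P σ s, ∀ n, cylProb M σ [] s (ω.prefix n) ≠ 0 := by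
  simp only [ae_iff, not_forall, not_not]
  refine measure_mono_null (t := ⋃ l : {l // cylProb M σ [] s l = 0}, Cyl l.1) ?_
    (measure_iUnion_null fun l => (hP.2 σ s l).trans l.2)
  rintro ω ⟨n, hn⟩
  exact Set.mem_iUnion.2 ⟨⟨_, hn⟩, ω.mem_cyl_prefix n⟩

theorem IsPathMeasure.ae_isRun (hP : IsPathMeasure M P) (σ : Strategy M) (s : S) :
    ∀ᵐ ω ∂P σ s, M.IsRun s ω := by
  filter_upwards [hP.ae_cylProb_prefix_ne_zero σ s] with ω hω
  have hstep n := (cylProb_prefix_ne_zero σ (hω (n + 2))).2 n (by omega)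
  exact ⟨(cylProb_prefix_ne_zero σ (hω 1)).1, fun n => (hstep n).1, fun n => (hstep n).2⟩

theorem IsPathMeasure.measure_state_one_le (hP : IsPathMeasure M P) (σ : Strategy M) (s : S)
    (T : Set S) {c : ℝ≥0∞} (hc : ∀ a ∈ M.avail s, (M.trans s a).toOuterMeasure T ≤ c) :
    P σ s {ω | (ω 1).1 ∈ T} ≤ c := by
  have hcover : {ω : Traj S A | (ω 1).1 ∈ T} ≤ᵐ[P σ s]
      ⋃ (a : A) (t : T) (b : A), Cyl [(s, a), (t.1, b)] := by
    filter_upwards [hP.ae_isRun σ s] with ω hω hT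
    refine Set.mem_iUnion₂.2 ⟨(ω 0).2, ⟨_, hT⟩, Set.mem_iUnion.2 ⟨(ω 1).2, ?_⟩⟩
    rw [mem_cyl_pair, ← hω.head]
    exact ⟨rfl, rfl⟩
  calc P σ s {ω | (ω 1).1 ∈ T}
      ≤ ∑' (a : A) (t : T) (b : A), P σ s (Cyl [(s, a), (t.1, b)]) :=
        (measure_mono_ae hcover).trans <| (measure_iUnion_le _).trans <|
          ENNReal.tsum_le_tsum fun a => (measure_iUnion_le _).trans <|
            ENNReal.tsum_le_tsum fun t => measure_iUnion_le _
    _ = ∑' a, σ.act [] s a * (M.trans s a).toOuterMeasure T := by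
        simp only [hP.measure_cyl_pair, ENNReal.tsum_mul_left, PMF.tsum_coe, mul_one,
          PMF.toOuterMeasure_apply, tsum_subtype T (M.trans s _)]
    _ ≤ ∑' a, σ.act [] s a * c := ENNReal.tsum_le_tsum fun a => by
        by_cases hσ : σ.act [] s a = 0
        · simp [hσ]
        · exact mul_le_mul_right (hc a (σ.mem_avail [] s a ((PMF.mem_support_iff _ _).2 hσ))) _
    _ = c := by rw [ENNReal.tsum_mul_right, PMF.tsum_coe, one_mul]

end PathMeasure

theorem exM_avail_s0 {c : Ac} (hc : c ∈ exM.avail .s0) : c = .a ∨ c = .b := by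
  simpa [exM] using hc

theorem exM_trans_s0_a_s1 : exM.trans .s0 .a .s1 = 4 / 5 := by
  simp [exM, PMF.ofMultiset_apply, Multiset.insert_eq_cons]

theorem exM_trans_s0_b_u : exM.trans .s0 .b .u = 7 / 10 := by
  simp [exM, PMF.ofMultiset_apply, Multiset.insert_eq_cons]

theorem exM_trans_s0_s0 {c : Ac} (hc : c ∈ exM.avail .s0) : exM.trans .s0 c .s0 = 0 := by
  rcases exM_avail_s0 hc with rfl | rfl <;>
    simp [exM, PMF.ofMultiset_apply, Multiset.insert_eq_cons]

theorem exM_toOuterMeasure_s1_u_le {c : Ac} (hc : c ∈ exM.avail .s0) :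
    (exM.trans .s0 c).toOuterMeasure {.s1, .u} ≤ 4 / 5 := by
  rw [show ({.s1, .u} : Set St) = ↑({.s1, .u} : Finset St) by simp,
    PMF.toOuterMeasure_apply_finset]
  have h : (7 : ℝ≥0∞) / 10 ≤ 4 / 5 := by
    rw [← ENNReal.toReal_le_toReal (by simp [ENNReal.div_eq_top]) (by simp [ENNReal.div_eq_top])]
    norm_num [ENNReal.toReal_div]
  rcases exM_avail_s0 hc with rfl | rfl
  · simp [exM, PMF.ofMultiset_apply, Multiset.insert_eq_cons]
  · simpa [exM, PMF.ofMultiset_apply, Multiset.insert_eq_cons] using h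

theorem exM_toOuterMeasure_u_le {c : Ac} (hc : c ∈ exM.avail .s0) :
    (exM.trans .s0 c).toOuterMeasure {.u} ≤ 7 / 10 := by
  rw [PMF.toOuterMeasure_apply_singleton]
  rcases exM_avail_s0 hc with rfl | rfl <;>
    simp [exM, PMF.ofMultiset_apply, Multiset.insert_eq_cons]

theorem exM_isClosed {K : Set St} (hK : K ⊆ {.s1, .s2, .s3}) : exM.IsClosed K := by
  intro s hs c _ t ht
  obtain rfl | rfl | rfl := hK hs <;> simp_all [exM, PMF.pure_apply]

theorem exM_isRun_state_one_ne_s0 {ω : Traj St Ac} (hω : exM.IsRun .s0 ω) :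
    (ω 1).1 ≠ .s0 := by
  intro h
  have := hω.trans_ne_zero 0
  rw [hω.head, h] at this
  exact this (exM_trans_s0_s0 (hω.head ▸ hω.avail 0))

noncomputable def exStrategy (c : Ac) (hc : c ∈ exM.avail .s0) : Strategy exM :=
  exM.memorylessStrategy (fun | .s0 => c | _ => .loop) fun
    | .s0 => hc
    | .s1 | .s2 | .s3 | .u => by simp [exM]

section Values

variable {P : Strategy exM → St → Measure (Traj St Ac)} (hP : IsPathMeasure exM P)
include hP

theorem exM_measure_reach_s1_le (σ : Strategy exM) : P σ .s0 (Reach {.s1}) ≤ 4 / 5 := by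
  refine (measure_mono_ae ?_).trans
    (hP.measure_state_one_le σ .s0 _ fun _ => exM_toOuterMeasure_s1_u_le)
  filter_upwards [hP.ae_isRun σ .s0] with ω hω hreach
  have h0 := exM_isRun_state_one_ne_s0 hω
  show (ω 1).1 ∈ _
  by_contra h1
  refine hω.notMem_reach_of_isClosed (K := {.s2, .s3})
    (exM_isClosed (by simp [Set.subset_def])) ?_ (by simp) (by simp) hreach
  generalize (ω 1).1 = t at h0 h1 ⊢
  cases t <;> simp_all

theorem exM_measure_reach_u_le (σ : Strategy exM) :
    P σ .s0 (Reach ({.s0, .s1, .s2, .s3} : Set St)ᶜ) ≤ 7 / 10 := by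
  refine (measure_mono_ae ?_).trans
    (hP.measure_state_one_le σ .s0 _ fun _ => exM_toOuterMeasure_u_le)
  filter_upwards [hP.ae_isRun σ .s0] with ω hω hreach
  have h0 := exM_isRun_state_one_ne_s0 hω
  show (ω 1).1 ∈ _
  by_contra h1
  refine hω.notMem_reach_of_isClosed (K := {.s1, .s2, .s3}) (exM_isClosed subset_rfl) ?_
    (by simp) (Set.disjoint_compl_right_iff_subset.2 (by simp [Set.subset_def])) hreach
  generalize (ω 1).1 = t at h0 h1 ⊢
  cases t <;> simp_all

theorem exM_measure_reach_stay_ge :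
    4 / 5 ≤ P (exStrategy .a (by simp [exM])) .s0
      (Reach (({.s1} : Set St) ∩ {.s0, .s1, .s2, .s3}) ∩ Stay {.s0, .s1, .s2, .s3}) := by
  calc (4 : ℝ≥0∞) / 5 = P (exStrategy .a _) .s0 (Cyl [(.s0, .a), (.s1, .loop)]) := by
        rw [hP.measure_cyl_pair]
        simp [exStrategy, MDP.memorylessStrategy, exM_trans_s0_a_s1]
    _ ≤ _ := by
      refine measure_mono_ae ?_
      filter_upwards [hP.ae_isRun _ .s0] with ω hω hcyl
      change ω ∈ Cyl _ at hcyl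
      rw [mem_cyl_pair] at hcyl
      have h1 : (ω 1).1 = .s1 := by rw [hcyl.2]
      refine ⟨⟨1, by simp [h1]⟩, fun n => ?_⟩
      rcases n with _ | n
      · simp [hω.head]
      · have := hω.mem_of_isClosed (K := {.s1}) (exM_isClosed (by simp)) h1
          (Nat.le_add_left 1 n)
        simp_all

theorem exM_measure_reach_u_ge :
    7 / 10 ≤
      P (exStrategy .b (by simp [exM])) .s0 (Reach ({.s0, .s1, .s2, .s3} : Set St)ᶜ) := by
  calc (7 : ℝ≥0∞) / 10 = P (exStrategy .b _) .s0 (Cyl [(.s0, .b), (.u, .loop)]) := by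
        rw [hP.measure_cyl_pair]
        simp [exStrategy, MDP.memorylessStrategy, exM_trans_s0_b_u]
    _ ≤ _ := by
      refine measure_mono fun ω hcyl => ⟨1, ?_⟩
      rw [mem_cyl_pair] at hcyl
      simp [hcyl.2]

theorem exM_pmax_reach_stay :
    pmax exM P .s0
      (Reach (({.s1} : Set St) ∩ {.s0, .s1, .s2, .s3}) ∩ Stay {.s0, .s1, .s2, .s3}) = 4 / 5 :=
  le_antisymm
    (iSup_le fun σ => (measure_mono (reach_inter_stay_subset_reach _ _)).trans
      (exM_measure_reach_s1_le hP σ))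
    (le_iSup_of_le _ (exM_measure_reach_stay_ge hP))

theorem exM_pmax_reach_s1 : pmax exM P .s0 (Reach {.s1}) = 4 / 5 :=
  le_antisymm (iSup_le (exM_measure_reach_s1_le hP))
    ((exM_pmax_reach_stay hP).symm.le.trans
      (iSup_mono fun _ => measure_mono (reach_inter_stay_subset_reach _ _)))

theorem exM_pmax_reach_u :
    pmax exM P .s0 (Reach ({.s0, .s1, .s2, .s3} : Set St)ᶜ) = 7 / 10 :=
  le_antisymm (iSup_le (exM_measure_reach_u_le hP))
    (le_iSup_of_le _ (exM_measure_reach_u_ge hP))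

end Values

/-- For the MDP `exM`, with `C = {s₀, s₁, s₂, s₃}` and `R = {s₁}`:
`P^max[Reach R] = P^max[Reach (R ∩ C) ∩ Stay C] = 0.8` while `P^max[Reach (S \ C)] = 0.7`.
In particular, for every `0 < ε ≤ 0.7` there are an MDP `M`, a set `C` containing the
initial state that is not an `ε`-core, and a set `R ⊆ C` such that the reachability value
`P^max[Reach R]` is computed exactly by restricting to `C`. -/
theorem core_not_always_required
    (P : Strategy exM → St → Measure (Traj St Ac)) (hP : IsPathMeasure exM P) :
    (pmax exM P exM.init (Reach ({St.s1} : Set St))).toReal = 0.8 ∧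
    (pmax exM P exM.init
        (Reach (({St.s1} : Set St) ∩ {St.s0, St.s1, St.s2, St.s3}) ∩
          Stay ({St.s0, St.s1, St.s2, St.s3} : Set St))).toReal = 0.8 ∧
    (pmax exM P exM.init (Reach (({St.s0, St.s1, St.s2, St.s3} : Set St)ᶜ))).toReal = 0.7 ∧
    ∀ ε : ℝ, 0 < ε → ε ≤ 0.7 →
      ∃ (M : MDP St Ac) (C R : Set St), M.init ∈ C ∧ R ⊆ C ∧
        ∀ P' : Strategy M → St → Measure (Traj St Ac), IsPathMeasure M P' →
          ¬ IsCore M P' ε C ∧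
            pmax M P' M.init (Reach R) = pmax M P' M.init (Reach (R ∩ C) ∩ Stay C) := by
  have hinit : exM.init = St.s0 := rfl
  refine ⟨?_, ?_, ?_, fun ε _ hε => ⟨exM, {St.s0, St.s1, St.s2, St.s3}, {St.s1},
    by simp [hinit], by simp,
    fun P' hP' => ⟨?_, (exM_pmax_reach_s1 hP').trans (exM_pmax_reach_stay hP').symm⟩⟩⟩
  · rw [hinit, exM_pmax_reach_s1 hP]
    norm_num [ENNReal.toReal_div]
  · rw [hinit, exM_pmax_reach_stay hP]
    norm_num [ENNReal.toReal_div]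
  · rw [hinit, exM_pmax_reach_u hP]
    norm_num [ENNReal.toReal_div]
  · rw [IsCore, hinit, exM_pmax_reach_u hP', not_lt,
      ENNReal.ofReal_le_iff_le_toReal (by simp [ENNReal.div_eq_top])]
    norm_num [ENNReal.toReal_div]
    linarith
end

section
/- Let ε be a real number with 0 < ε < 1/2. Consider the four-state Markov chain with states {s₀, s₁, s₂, s₃}, initial state s₀, transition function δ(s₀) = (ε/2)·δ_{s₁} + (1−ε)·δ_{s₂} + (ε/2)·δ_{s₃}, and δ(sᵢ) = δ_{sᵢ} for i ∈ {1,2,3}. Then both {s₀, s₁, s₂} and {s₀, s₂, s₃} are minimal ε-cores of this chain, and they are distinct. In particular, for every ε with 0 < ε < 1/2 there exists an MDP with two distinct minimal ε-cores. -/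
open MeasureTheory

/-- A Markov chain: an initial state and a transition distribution for each state. -/
structure MC (S : Type*) where
  init : S
  trans : S → PMF S

/-- The space of infinite paths `s₀ s₁ s₂ ⋯` of a Markov chain. -/
def MCTraj (S : Type*) := ℕ → S

instance {S : Type*} : MeasurableSpace (MCTraj S) :=
  @MeasurableSpace.pi ℕ (fun _ => S) (fun _ => ⊤)

variable {S : Type*}

/-- The probability that a path of the chain starting in state `s` begins with exactly the
finite sequence `pre` of states. -/
noncomputable def mcCylProb [DecidableEq S] (M : MC S) : S → List S → ENNReal
  | _, [] => 1
  | s, t :: rest =>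
      (if t = s then 1 else 0) * ∑' s' : S, (M.trans s) s' * mcCylProb M s' rest

/-- The cylinder set of all infinite paths whose first coordinates agree with `pre`. -/
def MCCyl (pre : List S) : Set (MCTraj S) :=
  {ω | ∀ i : Fin pre.length, ω i = pre.get i}

/-- `P` is the family of path measures of `M` induced (via the Ionescu–Tulcea construction)
by the start states: each `P s` is a probability measure on infinite paths starting in `s`
whose value on every cylinder is the product of the transition probabilities. -/
def IsMCPathMeasure [DecidableEq S] (M : MC S) (P : S → Measure (MCTraj S)) : Prop :=
  (∀ s, IsProbabilityMeasure (P s)) ∧ ∀ s pre, P s (MCCyl pre) = mcCylProb M s pre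

/-- The set of paths that visit `R` at some point. -/
def MCReach (R : Set S) : Set (MCTraj S) := {ω | ∃ i, ω i ∈ R}

/-- `C` is an `ε`-core of the chain: the probability of ever leaving `C` is `< ε`. -/
def IsMCCore [DecidableEq S] (M : MC S) (P : S → Measure (MCTraj S)) (ε : ℝ)
    (C : Set S) : Prop :=
  P M.init (MCReach Cᶜ) < ENNReal.ofReal ε

/-- `C` is a minimal `ε`-core: it is an `ε`-core and no proper subset of it is one. -/
def IsMinimalMCCore [DecidableEq S] (M : MC S) (P : S → Measure (MCTraj S)) (ε : ℝ)
    (C : Set S) : Prop :=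
  IsMCCore M P ε C ∧ ∀ C' ⊂ C, ¬ IsMCCore M P ε C'

/-- The four-state Markov chain with states `{s₀, s₁, s₂, s₃}` (encoded as `Fin 4`), initial
state `s₀ = 0`, `δ(s₀) = (ε/2)·δ_{s₁} + (1−ε)·δ_{s₂} + (ε/2)·δ_{s₃}`, and `s₁`, `s₂`, `s₃`
absorbing. -/
noncomputable def chain4 (ε : ℝ) (h1 : 0 < ε) (h2 : ε < 1 / 2) : MC (Fin 4) where
  init := 0
  trans := fun s =>
    if s = 0 then
      PMF.ofFintype
        ![0, ENNReal.ofReal (ε / 2), ENNReal.ofReal (1 - ε), ENNReal.ofReal (ε / 2)]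
        (by
          rw [Fin.sum_univ_four]
          simp only [Matrix.cons_val_zero, Matrix.cons_val_one, Matrix.head_cons,
            Matrix.cons_val_two, Matrix.tail_cons, Matrix.cons_val_three]
          rw [zero_add, ← ENNReal.ofReal_add (by linarith) (by linarith),
            ← ENNReal.ofReal_add (by linarith) (by linarith)]
          rw [show ε / 2 + (1 - ε) + ε / 2 = (1 : ℝ) by ring, ENNReal.ofReal_one])
    else PMF.pure s

/-! From `s₀` the chain moves in one step to an absorbing state, so almost every path is
constant from time `1` on. Hence a set `R ∌ s₀` is reached with probability `δ(s₀)(R)`, while a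
set containing `s₀` is reached surely. So `C` is an `ε`-core iff `s₀, s₂ ∈ C` and `C` contains
`s₁` or `s₃`: omitting `s₂` costs `1 - ε`, omitting both `s₁` and `s₃` costs `ε`, omitting just
one of them only `ε / 2`. The minimal such sets are `{s₀, s₁, s₂}` and `{s₀, s₂, s₃}`. -/

section Cylinders

variable [DecidableEq S] (M : MC S)

theorem mcCylProb_singleton (s : S) : mcCylProb M s [s] = 1 := by
  simp [mcCylProb]

theorem mcCylProb_cons_cons (s t : S) (rest : List S) :
    mcCylProb M s (s :: t :: rest) = M.trans s t * mcCylProb M t (t :: rest) := by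
  rw [mcCylProb, if_pos rfl, one_mul, tsum_eq_single t]
  intro t' ht'
  rw [mcCylProb, if_neg (Ne.symm ht'), zero_mul, mul_zero]

theorem mcCylProb_pair (s t : S) : mcCylProb M s [s, t] = M.trans s t := by
  rw [mcCylProb_cons_cons, mcCylProb_singleton, mul_one]

theorem mcCylProb_replicate_of_trans_eq_pure {t : S} (ht : M.trans t = PMF.pure t) (n : ℕ) :
    mcCylProb M t (List.replicate (n + 1) t) = 1 := by
  induction n with
  | zero => exact mcCylProb_singleton M t
  | succ n ih =>
    rw [List.replicate_succ, List.replicate_succ, mcCylProb_cons_cons, ht, PMF.pure_apply_self,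
      one_mul, ← List.replicate_succ, ih]

theorem mcCylProb_cons_replicate_of_trans_eq_pure (s : S) {t : S}
    (ht : M.trans t = PMF.pure t) (n : ℕ) :
    mcCylProb M s (s :: List.replicate (n + 1) t) = M.trans s t := by
  rw [List.replicate_succ, mcCylProb_cons_cons, ← List.replicate_succ,
    mcCylProb_replicate_of_trans_eq_pure M ht, mul_one]

end Cylinders

theorem measurableSet_setOf_apply_mem (n : ℕ) (A : Set S) :
    MeasurableSet {ω : MCTraj S | ω n ∈ A} :=
  @measurable_pi_apply ℕ (fun _ => S) (fun _ => ⊤) n A trivial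

theorem measurableSet_MCCyl (l : List S) : MeasurableSet (MCCyl l) := by
  have : MCCyl l = ⋂ i : Fin l.length, {ω : MCTraj S | ω i ∈ ({l.get i} : Set S)} := by
    ext ω; simp [MCCyl]
  rw [this]
  exact .iInter fun i => measurableSet_setOf_apply_mem _ _

theorem mem_MCCyl_singleton {ω : MCTraj S} {a : S} : ω ∈ MCCyl [a] ↔ ω 0 = a := by
  simp [MCCyl]

theorem mem_MCCyl_cons_replicate {ω : MCTraj S} {a t : S} {m : ℕ} :
    ω ∈ MCCyl (a :: List.replicate m t) ↔ ω 0 = a ∧ ∀ j < m, ω (j + 1) = t := by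
  simp [MCCyl, Fin.forall_fin_succ, Fin.forall_iff]

theorem mem_MCCyl_pair {ω : MCTraj S} {a b : S} : ω ∈ MCCyl [a, b] ↔ ω 0 = a ∧ ω 1 = b := by
  simp [MCCyl, Fin.forall_fin_two]

namespace IsMCPathMeasure

variable [DecidableEq S] {M : MC S} {P : S → Measure (MCTraj S)}

theorem measure_setOf_apply_zero_ne (hP : IsMCPathMeasure M P) (s : S) :
    P s {ω | ω 0 ≠ s} = 0 := by
  have := hP.1 s
  have hcompl : {ω : MCTraj S | ω 0 ≠ s} = (MCCyl [s])ᶜ := by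
    ext ω; simp [mem_MCCyl_singleton]
  rw [hcompl, measure_compl (measurableSet_MCCyl _) (measure_ne_top _ _), hP.2,
    mcCylProb_singleton, measure_univ, tsub_self]

theorem measure_setOf_apply_one_eq (hP : IsMCPathMeasure M P) (s t : S) :
    P s {ω | ω 1 = t} = M.trans s t := by
  rw [← mcCylProb_pair, ← hP.2]
  refine le_antisymm ?_ (measure_mono fun ω hω => (mem_MCCyl_pair.mp hω).2)
  calc P s {ω | ω 1 = t} ≤ P s ({ω | ω 0 ≠ s} ∪ MCCyl [s, t]) :=
        measure_mono fun ω hω => by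
          by_cases h0 : ω 0 = s
          · exact Or.inr (mem_MCCyl_pair.mpr ⟨h0, hω⟩)
          · exact Or.inl h0
    _ ≤ P s {ω | ω 0 ≠ s} + P s (MCCyl [s, t]) := measure_union_le _ _
    _ = P s (MCCyl [s, t]) := by rw [hP.measure_setOf_apply_zero_ne, zero_add]

theorem measure_setOf_apply_one_mem [Countable S] (hP : IsMCPathMeasure M P) (s : S)
    (R : Set S) : P s {ω | ω 1 ∈ R} = (M.trans s).toOuterMeasure R := by
  have hunion : {ω : MCTraj S | ω 1 ∈ R} = ⋃ t : R, {ω | ω 1 = (t : S)} := by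
    ext ω; simp
  rw [hunion, measure_iUnion, PMF.toOuterMeasure_apply, ← tsum_subtype]
  · simp only [hP.measure_setOf_apply_one_eq]
  · exact fun t t' htt' => Set.disjoint_left.mpr fun ω h h' =>
      htt' (Subtype.ext (h.symm.trans h'))
  · exact fun t => measurableSet_setOf_apply_mem 1 {(t : S)}

theorem measure_reach_of_mem (hP : IsMCPathMeasure M P) {s : S} {R : Set S} (hs : s ∈ R) :
    P s (MCReach R) = 1 := by
  have := hP.1 s
  refine le_antisymm prob_le_one ?_
  calc 1 = P s (MCCyl [s]) := by rw [hP.2, mcCylProb_singleton]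
    _ ≤ P s (MCReach R) := measure_mono fun ω hω => ⟨0, (mem_MCCyl_singleton.mp hω) ▸ hs⟩

theorem toOuterMeasure_le_measure_reach [Countable S] (hP : IsMCPathMeasure M P) (s : S)
    (R : Set S) : (M.trans s).toOuterMeasure R ≤ P s (MCReach R) := by
  rw [← hP.measure_setOf_apply_one_mem]
  exact measure_mono fun ω hω => ⟨1, hω⟩

theorem measure_setOf_apply_one_eq_and_ne (hP : IsMCPathMeasure M P) (s : S) {t : S}
    (ht : M.trans t = PMF.pure t) (n : ℕ) : P s {ω | ω 1 = t ∧ ω (n + 1) ≠ t} = 0 := by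
  -- the paths of `[s, t]` leaving `t` by time `n + 1` lie between two cylinders of mass `δ(s)(t)`
  have hsub : MCCyl (s :: List.replicate (n + 1) t) ⊆ MCCyl [s, t] := fun ω hω =>
    mem_MCCyl_pair.mpr ⟨(mem_MCCyl_cons_replicate.mp hω).1,
      (mem_MCCyl_cons_replicate.mp hω).2 0 n.succ_pos⟩
  have hleave : P s (MCCyl [s, t] \ MCCyl (s :: List.replicate (n + 1) t)) = 0 := by
    have := hP.1 s
    rw [measure_sdiff hsub (measurableSet_MCCyl _).nullMeasurableSet (measure_ne_top _ _),
      hP.2, hP.2, mcCylProb_pair, mcCylProb_cons_replicate_of_trans_eq_pure M s ht, tsub_self]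
  refine measure_mono_null (fun ω ⟨h1, hn⟩ => ?_)
    (measure_union_null (hP.measure_setOf_apply_zero_ne s) hleave)
  by_cases h0 : ω 0 = s
  · exact Or.inr ⟨mem_MCCyl_pair.mpr ⟨h0, h1⟩,
      fun hω => hn ((mem_MCCyl_cons_replicate.mp hω).2 n n.lt_succ_self)⟩
  · exact Or.inl h0

theorem measure_setOf_apply_ne_apply_one [Countable S] (hP : IsMCPathMeasure M P) {s : S}
    (hsucc : ∀ t, M.trans s t ≠ 0 → M.trans t = PMF.pure t) (n : ℕ) :
    P s {ω | ω (n + 1) ≠ ω 1} = 0 := by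
  have hunion : {ω : MCTraj S | ω (n + 1) ≠ ω 1} = ⋃ t, {ω | ω 1 = t ∧ ω (n + 1) ≠ t} := by
    ext ω; simp
  rw [hunion]
  refine measure_iUnion_null fun t => ?_
  by_cases ht : M.trans s t = 0
  · exact measure_mono_null (fun ω hω => hω.1) (hP.measure_setOf_apply_one_eq s t ▸ ht)
  · exact hP.measure_setOf_apply_one_eq_and_ne s (hsucc t ht) n

theorem measure_reach_le [Countable S] (hP : IsMCPathMeasure M P) {s : S}
    (hsucc : ∀ t, M.trans s t ≠ 0 → M.trans t = PMF.pure t) {R : Set S} (hs : s ∉ R) :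
    P s (MCReach R) ≤ (M.trans s).toOuterMeasure R := by
  have hsub : MCReach R ⊆
      ({ω | ω 0 ≠ s} ∪ ⋃ n : ℕ, {ω | ω (n + 1) ≠ ω 1}) ∪ {ω | ω 1 ∈ R} := by
    rintro ω ⟨_ | n, hω⟩
    · exact Or.inl (Or.inl fun h0 => hs (h0 ▸ hω))
    · by_cases hn : ω (n + 1) = ω 1
      · exact Or.inr (show ω 1 ∈ R from hn ▸ hω)
      · exact Or.inl (Or.inr (Set.mem_iUnion.mpr ⟨n, hn⟩))
  have hnull : P s ({ω | ω 0 ≠ s} ∪ ⋃ n : ℕ, {ω | ω (n + 1) ≠ ω 1}) = 0 :=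
    measure_union_null (hP.measure_setOf_apply_zero_ne s)
      (measure_iUnion_null (hP.measure_setOf_apply_ne_apply_one hsucc))
  calc P s (MCReach R)
      ≤ P s ({ω | ω 0 ≠ s} ∪ ⋃ n : ℕ, {ω | ω (n + 1) ≠ ω 1}) + P s {ω | ω 1 ∈ R} :=
        (measure_mono hsub).trans (measure_union_le _ _)
    _ = (M.trans s).toOuterMeasure R := by rw [hnull, zero_add, hP.measure_setOf_apply_one_mem]

theorem measure_reach_eq [Countable S] (hP : IsMCPathMeasure M P) {s : S}
    (hsucc : ∀ t, M.trans s t ≠ 0 → M.trans t = PMF.pure t) {R : Set S} (hs : s ∉ R) :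
    P s (MCReach R) = (M.trans s).toOuterMeasure R :=
  le_antisymm (hP.measure_reach_le hsucc hs) (hP.toOuterMeasure_le_measure_reach s R)

end IsMCPathMeasure

section Chain4

variable {ε : ℝ} {h1 : 0 < ε} {h2 : ε < 1 / 2}

theorem chain4_trans_zero_apply (t : Fin 4) :
    (chain4 ε h1 h2).trans 0 t =
      ![0, ENNReal.ofReal (ε / 2), ENNReal.ofReal (1 - ε), ENNReal.ofReal (ε / 2)] t := by
  simp [chain4]

theorem chain4_trans_of_ne_zero {t : Fin 4} (ht : t ≠ 0) :
    (chain4 ε h1 h2).trans t = PMF.pure t := by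
  simp [chain4, ht]

theorem chain4_trans_eq_pure_of_trans_zero_ne_zero {t : Fin 4}
    (ht : (chain4 ε h1 h2).trans 0 t ≠ 0) : (chain4 ε h1 h2).trans t = PMF.pure t :=
  chain4_trans_of_ne_zero fun h => ht (by simp [h, chain4_trans_zero_apply])

theorem chain4_isMCCore_iff {P : Fin 4 → Measure (MCTraj (Fin 4))}
    (hP : IsMCPathMeasure (chain4 ε h1 h2) P) (C : Set (Fin 4)) :
    IsMCCore (chain4 ε h1 h2) P ε C ↔ 0 ∈ C ∧ 2 ∈ C ∧ (1 ∈ C ∨ 3 ∈ C) := by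
  set p := (chain4 ε h1 h2).trans 0
  have hp (t : Fin 4) : p t = _ := chain4_trans_zero_apply t
  change P 0 (MCReach Cᶜ) < ENNReal.ofReal ε ↔ _
  by_cases h0C : 0 ∈ C
  swap
  · rw [hP.measure_reach_of_mem h0C]
    simp only [h0C, false_and, iff_false, not_lt]
    exact ENNReal.ofReal_le_one.mpr (by linarith)
  rw [hP.measure_reach_eq (fun _ => chain4_trans_eq_pure_of_trans_zero_ne_zero)
    (Set.notMem_compl_iff.mpr h0C)]
  simp only [h0C, true_and]
  constructor
  · intro hlt
    by_contra! hC
    refine hlt.not_ge ?_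
    by_cases h2C : 2 ∈ C
    · calc ENNReal.ofReal ε = p.toOuterMeasure ↑({1, 3} : Finset (Fin 4)) := by
            rw [PMF.toOuterMeasure_apply_finset, Finset.sum_pair (by decide), hp, hp]
            simp only [Matrix.cons_val]
            rw [← ENNReal.ofReal_add (by linarith) (by linarith), add_halves]
        _ ≤ p.toOuterMeasure Cᶜ := measure_mono fun t ht => by
            simp only [Finset.coe_insert, Finset.coe_singleton, Set.mem_insert_iff,
              Set.mem_singleton_iff] at ht
            rcases ht with rfl | rfl
            · exact (hC h2C).1
            · exact (hC h2C).2
    · calc ENNReal.ofReal ε ≤ ENNReal.ofReal (1 - ε) := ENNReal.ofReal_le_ofReal (by linarith)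
        _ = p.toOuterMeasure {2} := by rw [PMF.toOuterMeasure_apply_singleton, hp]; rfl
        _ ≤ p.toOuterMeasure Cᶜ := measure_mono (Set.singleton_subset_iff.mpr h2C)
  · rintro ⟨h2C, h13C⟩
    obtain ⟨x, hCx, hpx⟩ : ∃ x, Cᶜ ⊆ {x} ∧ p x = ENNReal.ofReal (ε / 2) := by
      rcases h13C with h1C | h3C
      · refine ⟨3, fun t ht => ?_, hp 3⟩
        fin_cases t <;> simp_all
      · refine ⟨1, fun t ht => ?_, hp 1⟩
        fin_cases t <;> simp_all
    calc p.toOuterMeasure Cᶜ ≤ p.toOuterMeasure {x} := measure_mono hCx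
      _ = ENNReal.ofReal (ε / 2) := by rw [PMF.toOuterMeasure_apply_singleton, hpx]
      _ < ENNReal.ofReal ε := (ENNReal.ofReal_lt_ofReal_iff h1).mpr (by linarith)

theorem chain4_isMinimalMCCore {P : Fin 4 → Measure (MCTraj (Fin 4))}
    (hP : IsMCPathMeasure (chain4 ε h1 h2) P) :
    IsMinimalMCCore (chain4 ε h1 h2) P ε {0, 1, 2} ∧
      IsMinimalMCCore (chain4 ε h1 h2) P ε {0, 2, 3} := by
  simp only [IsMinimalMCCore, chain4_isMCCore_iff hP]
  refine ⟨⟨by simp, fun C hC ⟨h0C, h2C, h13C⟩ => hC.not_subset ?_⟩,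
    ⟨by simp, fun C hC ⟨h0C, h2C, h13C⟩ => hC.not_subset ?_⟩⟩
  · have h1C : 1 ∈ C := h13C.resolve_right fun h3C => by simpa using hC.subset h3C
    simp [Set.insert_subset_iff, h0C, h1C, h2C]
  · have h3C : 3 ∈ C := h13C.resolve_left fun h1C => by simpa using hC.subset h1C
    simp [Set.insert_subset_iff, h0C, h2C, h3C]

end Chain4

/-- For `0 < ε < 1/2`, in the chain `chain4 ε` both `{s₀, s₁, s₂}` and
`{s₀, s₂, s₃}` are minimal `ε`-cores, and they are distinct. In particular, for every such
`ε` there exists a (Markov-chain) MDP with two distinct minimal `ε`-cores. -/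
theorem minimal_cores_not_unique (ε : ℝ) (h1 : 0 < ε) (h2 : ε < 1 / 2)
    (P : Fin 4 → Measure (MCTraj (Fin 4)))
    (hP : IsMCPathMeasure (chain4 ε h1 h2) P) :
    IsMinimalMCCore (chain4 ε h1 h2) P ε ({0, 1, 2} : Set (Fin 4)) ∧
    IsMinimalMCCore (chain4 ε h1 h2) P ε ({0, 2, 3} : Set (Fin 4)) ∧
    ({0, 1, 2} : Set (Fin 4)) ≠ ({0, 2, 3} : Set (Fin 4)) ∧
    ∀ ε' : ℝ, 0 < ε' → ε' < 1 / 2 →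
      ∃ M : MC (Fin 4), ∀ P' : Fin 4 → Measure (MCTraj (Fin 4)),
        IsMCPathMeasure M P' →
          ∃ C C' : Set (Fin 4), C ≠ C' ∧
            IsMinimalMCCore M P' ε' C ∧ IsMinimalMCCore M P' ε' C' := by
  have hne : ({0, 1, 2} : Set (Fin 4)) ≠ {0, 2, 3} := fun h => by
    simpa using h.subset (show (1 : Fin 4) ∈ ({0, 1, 2} : Set (Fin 4)) by simp)
  refine ⟨(chain4_isMinimalMCCore hP).1, (chain4_isMinimalMCCore hP).2, hne,
    fun ε' h1' h2' =>
      ⟨chain4 ε' h1' h2', fun P' hP' => ⟨_, _, hne, chain4_isMinimalMCCore hP'⟩⟩⟩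
end

section
/- Let M be a finite MDP, ε > 0, and let (T, B) be a maximal end component of M. If there exists a state s ∈ T with P^max[Reach {s}] ≥ ε, then T ⊆ C for every ε-core C of M. -/
/-! Let `x ∈ T` lie outside `C`. Play a strategy that reaches `s` with probability close to
`P^max[Reach {s}]`, and once `s` has been visited switch to the memoryless strategy that chooses
uniformly among the available actions of `B`. Inside the end component this is a finite Markov
chain on `T` in which every state reaches `x` within some `N` steps with positive probability, so
`x` is missed for `kN` steps with probability at most `qᵏ` for some `q < 1`. Hence
`P^max[Reach {x}] ≥ P^max[Reach {s}] ≥ ε`, whereas `x ∉ C` gives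
`P^max[Reach {x}] ≤ P^max[Reach (S \ C)] < ε`. -/

open MeasureTheory

variable {S A : Type*}

/-- `(T, B)` is an end component of `M`: `T` and `B` are non-empty, every action of `B` is
available in some state of `T`, actions of `B` never leave `T`, and any two states of `T`
are connected by a finite path staying inside `T` and using only actions of `B`. -/
def IsEndComponent {S A : Type*} (M : MDP S A) (T : Set S) (B : Set A) : Prop :=
  T.Nonempty ∧ B.Nonempty ∧
    (B ⊆ ⋃ s ∈ T, (M.avail s : Set A)) ∧
    (∀ s ∈ T, ∀ a ∈ B, a ∈ M.avail s → (M.trans s a).support ⊆ T) ∧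
    ∀ s ∈ T, ∀ s' ∈ T,
      Relation.ReflTransGen
        (fun x y => x ∈ T ∧ ∃ a ∈ B, a ∈ M.avail x ∧ y ∈ (M.trans x a).support) s s'

/-- `(T, B)` is a maximal end component (MEC) of `M`. -/
def IsMEC {S A : Type*} (M : MDP S A) (T : Set S) (B : Set A) : Prop :=
  IsEndComponent M T B ∧
    ∀ T' B', IsEndComponent M T' B' → T ⊆ T' → B ⊆ B' → T' = T ∧ B' = B

open scoped ENNReal

section FiniteSums

variable {X : Type*} [Fintype X]

lemma PMF.sum_coe_eq_one (p : PMF X) : ∑ x, p x = 1 := by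
  rw [← p.tsum_coe, tsum_fintype]

lemma PMF.sum_mul_le_sum_mul (p : PMF X) {f g : X → ℝ≥0∞} (h : ∀ x ∈ p.support, f x ≤ g x) :
    ∑ x, p x * f x ≤ ∑ x, p x * g x := by
  refine Finset.sum_le_sum fun x _ => ?_
  by_cases hx : x ∈ p.support
  · exact mul_le_mul_right (h x hx) _
  · simp [(p.apply_eq_zero_iff x).2 hx]

lemma PMF.sum_mul_le_one (p : PMF X) {f : X → ℝ≥0∞} (hf : ∀ x, f x ≤ 1) :
    ∑ x, p x * f x ≤ 1 :=
  calc ∑ x, p x * f x ≤ ∑ x, p x * 1 := p.sum_mul_le_sum_mul fun x _ => hf x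
    _ = 1 := by simp [p.sum_coe_eq_one]

lemma Fintype.sum_pi_fin_succ {N : Type*} [AddCommMonoid N] (k : ℕ)
    (g : (Fin (k + 1) → X) → N) : ∑ v, g v = ∑ x, ∑ w : Fin k → X, g (Fin.cons x w) := by
  rw [← (Fin.consEquiv fun _ => X).sum_comp g, Fintype.sum_prod_type]
  rfl

end FiniteSums

section StepBounded

open scoped Classical

variable [Fintype S] [Fintype A]

noncomputable def reachProb (M : MDP S A) (σ : Strategy M) (R : Set S) :
    ℕ → List (S × A) → S → ℝ≥0∞
  | 0, _, u => if u ∈ R then 1 else 0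
  | n + 1, h, u =>
      if u ∈ R then 1
      else ∑ a, σ.act h u a * ∑ u', M.trans u a u' * reachProb M σ R n (h ++ [(u, a)]) u'

noncomputable def chainReachProb (M : MDP S A) (p : S → PMF A) (R : Set S) : ℕ → S → ℝ≥0∞
  | 0, u => if u ∈ R then 1 else 0
  | n + 1, u =>
      if u ∈ R then 1 else ∑ a, p u a * ∑ u', M.trans u a u' * chainReachProb M p R n u'

noncomputable def chainMissProb (M : MDP S A) (p : S → PMF A) (R : Set S) : ℕ → S → ℝ≥0∞
  | 0, u => if u ∈ R then 0 else 1
  | n + 1, u =>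
      if u ∈ R then 0 else ∑ a, p u a * ∑ u', M.trans u a u' * chainMissProb M p R n u'

variable {M : MDP S A}

lemma reachProb_of_mem (σ : Strategy M) {R : Set S} {u : S} (hu : u ∈ R) (n : ℕ)
    (h : List (S × A)) : reachProb M σ R n h u = 1 := by
  cases n <;> simp [reachProb, hu]

lemma reachProb_le_one (σ : Strategy M) (R : Set S) :
    ∀ n h u, reachProb M σ R n h u ≤ 1
  | 0, _, u => by simp only [reachProb]; split <;> simp
  | n + 1, h, u => by
      simp only [reachProb]
      split
      · exact le_rfl
      · exact PMF.sum_mul_le_one _ fun a =>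
          PMF.sum_mul_le_one _ fun u' => reachProb_le_one σ R n _ u'

lemma chainReachProb_add_chainMissProb (p : S → PMF A) (R : Set S) :
    ∀ n u, chainReachProb M p R n u + chainMissProb M p R n u = 1
  | 0, u => by simp only [chainReachProb, chainMissProb]; split <;> simp
  | n + 1, u => by
      simp only [chainReachProb, chainMissProb]
      split
      · simp
      · simp only [← Finset.sum_add_distrib, ← mul_add, chainReachProb_add_chainMissProb p R n,
          mul_one, PMF.sum_coe_eq_one]

lemma chainReachProb_le_one (p : S → PMF A) (R : Set S) (n : ℕ) (u : S) :
    chainReachProb M p R n u ≤ 1 :=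
  le_self_add.trans_eq (chainReachProb_add_chainMissProb p R n u)

lemma chainMissProb_le_one (p : S → PMF A) (R : Set S) (n : ℕ) (u : S) :
    chainMissProb M p R n u ≤ 1 :=
  le_add_self.trans_eq (chainReachProb_add_chainMissProb p R n u)

lemma chainMissProb_of_mem (p : S → PMF A) {R : Set S} {u : S} (hu : u ∈ R) (n : ℕ) :
    chainMissProb M p R n u = 0 := by
  cases n <;> simp [chainMissProb, hu]

lemma chainMissProb_lt_one {p : S → PMF A} {R : Set S} {n : ℕ} {u : S}
    (h : 0 < chainReachProb M p R n u) : chainMissProb M p R n u < 1 := by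
  rw [← chainReachProb_add_chainMissProb p R n u, add_comm]
  exact ENNReal.lt_add_right (ne_top_of_le_ne_top ENNReal.one_ne_top
    (chainMissProb_le_one p R n u)) h.ne'

lemma chainReachProb_le_succ (p : S → PMF A) (R : Set S) :
    ∀ n u, chainReachProb M p R n u ≤ chainReachProb M p R (n + 1) u
  | 0, u => by simp only [chainReachProb]; split <;> simp
  | n + 1, u => by
      rw [chainReachProb.eq_2, chainReachProb.eq_2]
      split
      · exact le_rfl
      · gcongr with a _ u' _
        exact chainReachProb_le_succ p R n u'

lemma chainReachProb_mono (p : S → PMF A) (R : Set S) (u : S) :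
    Monotone fun n => chainReachProb M p R n u :=
  monotone_nat_of_le_succ fun n => chainReachProb_le_succ p R n u

end StepBounded

section Switching

open scoped Classical

variable [Fintype S] [Fintype A] {M : MDP S A}

noncomputable def switchStrategy (σ : Strategy M) (p : S → PMF A)
    (hp : ∀ u, (p u).support ⊆ M.avail u) (s : S) : Strategy M where
  act h u := if s ∈ h.map Prod.fst ∨ u = s then p u else σ.act h u
  mem_avail h u a ha := by
    split_ifs at ha
    exacts [hp u ha, σ.mem_avail h u a ha]

variable (σ : Strategy M) (p : S → PMF A) (hp : ∀ u, (p u).support ⊆ M.avail u) (s : S)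

lemma reachProb_switchStrategy_of_visited (R : Set S) :
    ∀ n h u, s ∈ h.map Prod.fst ∨ u = s →
      reachProb M (switchStrategy σ p hp s) R n h u = chainReachProb M p R n u
  | 0, _, _, _ => rfl
  | n + 1, h, u, hvis => by
      have hact : (switchStrategy σ p hp s).act h u = p u := by
        simp only [switchStrategy, if_pos hvis]
      have hvis' (a : A) : s ∈ (h ++ [(u, a)]).map Prod.fst := by
        rcases hvis with hs | rfl <;> simp [*]
      simp only [reachProb, chainReachProb, hact,
        fun a u' => reachProb_switchStrategy_of_visited R n (h ++ [(u, a)]) u' (.inl (hvis' a))]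

lemma reachProb_mul_chainReachProb_le_switchStrategy (t : S) (m : ℕ) :
    ∀ n h u, s ∉ h.map Prod.fst →
      reachProb M σ {s} n h u * chainReachProb M p {t} m s ≤
        reachProb M (switchStrategy σ p hp s) {t} (n + m) h u
  | n, h, u, hh => by
    by_cases hut : u ∈ ({t} : Set S)
    · rw [reachProb_of_mem _ hut]
      exact mul_le_one' (reachProb_le_one σ _ n h u) (chainReachProb_le_one p _ m s)
    by_cases hus : u = s
    · subst hus
      rw [reachProb_of_mem σ (Set.mem_singleton u), one_mul,
        reachProb_switchStrategy_of_visited σ p hp u _ _ h u (.inr rfl)]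
      exact chainReachProb_mono p _ u (Nat.le_add_left m n)
    cases n with
    | zero => simp [reachProb, hus]
    | succ n =>
      have hact : (switchStrategy σ p hp s).act h u = σ.act h u := by
        simp only [switchStrategy, if_neg (not_or.2 ⟨hh, hus⟩)]
      rw [Nat.add_right_comm, reachProb, reachProb, if_neg (show u ∉ ({s} : Set S) from hus),
        if_neg hut, hact, Finset.sum_mul]
      refine Finset.sum_le_sum fun a _ => ?_
      rw [mul_assoc, Finset.sum_mul]
      refine mul_le_mul_right (Finset.sum_le_sum fun u' _ => ?_) _
      rw [mul_assoc]
      exact mul_le_mul_right (reachProb_mul_chainReachProb_le_switchStrategy t m n _ u'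
        (by simp [hh, Ne.symm hus])) _

end Switching

section EndComponent

open scoped Classical

variable {M : MDP S A}

noncomputable def ecAction (M : MDP S A) (B : Set A) (u : S) : PMF A :=
  if h : ((M.avail u).filter (· ∈ B)).Nonempty then PMF.uniformOfFinset _ h
  else PMF.uniformOfFinset (M.avail u) (M.avail_nonempty u)

lemma ecAction_support_subset (B : Set A) (u : S) : (ecAction M B u).support ⊆ M.avail u := by
  unfold ecAction
  split_ifs <;> simp +contextual [PMF.support_uniformOfFinset, Set.subset_def]

namespace IsEndComponent

variable {T : Set S} {B : Set A} (hEC : IsEndComponent M T B)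
include hEC

lemma filter_avail_nonempty {u : S} (hu : u ∈ T) : ((M.avail u).filter (· ∈ B)).Nonempty := by
  obtain ⟨-, ⟨b, hb⟩, hBav, -, hconn⟩ := hEC
  obtain ⟨x, hxT, hbx⟩ : ∃ x ∈ T, b ∈ M.avail x := by simpa using hBav hb
  rcases (hconn u hu x hxT).cases_head with rfl | ⟨-, ⟨-, a, haB, haAv, -⟩, -⟩
  · exact ⟨b, by simp [hbx, hb]⟩
  · exact ⟨a, by simp [haAv, haB]⟩

lemma support_ecAction {u : S} (hu : u ∈ T) :
    (ecAction M B u).support = {a | a ∈ M.avail u ∧ a ∈ B} := by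
  rw [ecAction, dif_pos (hEC.filter_avail_nonempty hu), PMF.support_uniformOfFinset]
  ext a
  simp

lemma mem_of_mem_support_ecAction {u u' : S} {a : A} (hu : u ∈ T)
    (ha : a ∈ (ecAction M B u).support) (hu' : u' ∈ (M.trans u a).support) : u' ∈ T := by
  rw [hEC.support_ecAction hu] at ha
  exact hEC.2.2.2.1 u hu a ha.2 ha.1 hu'

variable [Fintype S] [Fintype A]

lemma exists_chainReachProb_pos {t u : S} (ht : t ∈ T) (hu : u ∈ T) :
    ∃ n, 0 < chainReachProb M (ecAction M B) {t} n u := by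
  induction hEC.2.2.2.2 u hu t ht using Relation.ReflTransGen.head_induction_on with
  | refl => exact ⟨0, by simp [chainReachProb]⟩
  | @head x c hstep _ ih =>
    obtain ⟨hxT, a, haB, haAv, hc⟩ := hstep
    obtain ⟨n, hn⟩ := ih (hEC.2.2.2.1 x hxT a haB haAv hc)
    by_cases hxt : x = t
    · exact ⟨0, by simp [chainReachProb, hxt]⟩
    refine ⟨n + 1, ?_⟩
    have ha : a ∈ (ecAction M B x).support := by
      rw [hEC.support_ecAction hxT]
      exact ⟨haAv, haB⟩
    rw [chainReachProb, if_neg (show x ∉ ({t} : Set S) from hxt)]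
    exact Finset.sum_pos_iff.2 ⟨a, Finset.mem_univ _, ENNReal.mul_pos_iff.2
      ⟨pos_iff_ne_zero.2 ha, Finset.sum_pos_iff.2 ⟨c, Finset.mem_univ _,
        ENNReal.mul_pos_iff.2 ⟨pos_iff_ne_zero.2 hc, hn⟩⟩⟩⟩

lemma chainMissProb_add_le {t : S} {b : ℕ} {q : ℝ≥0∞}
    (hq : ∀ v ∈ T, chainMissProb M (ecAction M B) {t} b v ≤ q) :
    ∀ a u, u ∈ T → chainMissProb M (ecAction M B) {t} (a + b) u ≤
      chainMissProb M (ecAction M B) {t} a u * q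
  | a, u, hu => by
    by_cases hut : u ∈ ({t} : Set S)
    · simp [chainMissProb_of_mem _ hut]
    cases a with
    | zero => simpa [chainMissProb, hut] using hq u hu
    | succ a =>
      calc chainMissProb M (ecAction M B) {t} (a + 1 + b) u
          = ∑ c, ecAction M B u c *
              ∑ u', M.trans u c u' * chainMissProb M (ecAction M B) {t} (a + b) u' := by
            rw [Nat.add_right_comm, chainMissProb, if_neg hut]
        _ ≤ ∑ c, ecAction M B u c *
              ∑ u', M.trans u c u' * (chainMissProb M (ecAction M B) {t} a u' * q) :=
            PMF.sum_mul_le_sum_mul _ fun c hc => PMF.sum_mul_le_sum_mul _ fun u' hu' =>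
              chainMissProb_add_le hq a u' (hEC.mem_of_mem_support_ecAction hu hc hu')
        _ = chainMissProb M (ecAction M B) {t} (a + 1) u * q := by
            simp only [chainMissProb, if_neg hut, Finset.sum_mul, mul_assoc]

lemma exists_chainMissProb_lt {s t : S} (hs : s ∈ T) (ht : t ∈ T) {η : ℝ≥0∞} (hη : 0 < η) :
    ∃ m, chainMissProb M (ecAction M B) {t} m s < η := by
  obtain ⟨N, hN⟩ : ∃ N, ∀ u ∈ T, 0 < chainReachProb M (ecAction M B) {t} N u := by
    choose f hf using fun u : T => hEC.exists_chainReachProb_pos ht u.2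
    exact ⟨Finset.univ.sup f, fun u hu => (hf ⟨u, hu⟩).trans_le
      (chainReachProb_mono _ _ _ (Finset.le_sup (Finset.mem_univ _)))⟩
  set q := (Finset.univ.filter (· ∈ T)).sup (chainMissProb M (ecAction M B) {t} N)
  have hq : ∀ v ∈ T, chainMissProb M (ecAction M B) {t} N v ≤ q := fun v hv =>
    Finset.le_sup (by simpa using hv)
  have hq1 : q < 1 := (Finset.sup_lt_iff zero_lt_one).2 fun v hv =>
    chainMissProb_lt_one (hN v (by simpa using hv))
  have hpow (k : ℕ) : chainMissProb M (ecAction M B) {t} (k * N) s ≤ q ^ k := by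
    induction k generalizing s with
    | zero => simpa using chainMissProb_le_one (ecAction M B) {t} 0 s
    | succ k ih =>
      rw [Nat.succ_mul, pow_succ]
      exact (hEC.chainMissProb_add_le hq _ s hs).trans (mul_le_mul_left (ih hs) q)
  obtain ⟨k, hk⟩ :=
    ((ENNReal.tendsto_pow_atTop_nhds_zero_of_lt_one hq1).eventually_lt_const hη).exists
  exact ⟨k * N, (hpow k).trans_lt hk⟩

lemma iSup_chainReachProb_eq_one {s t : S} (hs : s ∈ T) (ht : t ∈ T) :
    ⨆ m, chainReachProb M (ecAction M B) {t} m s = 1 := by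
  refine le_antisymm (iSup_le fun m => chainReachProb_le_one _ _ m s)
    (ENNReal.le_of_forall_pos_le_add fun η hη _ => ?_)
  obtain ⟨m, hm⟩ := hEC.exists_chainMissProb_lt hs ht (ENNReal.coe_pos.2 hη)
  calc 1 = chainReachProb M (ecAction M B) {t} m s + chainMissProb M (ecAction M B) {t} m s :=
        (chainReachProb_add_chainMissProb _ _ m s).symm
    _ ≤ (⨆ m, chainReachProb M (ecAction M B) {t} m s) + η :=
        add_le_add (le_iSup (fun m => chainReachProb M (ecAction M B) {t} m s) m) hm.le

end IsEndComponent

end EndComponent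

section Cylinders

lemma mem_cyl_ofFn {k : ℕ} (v : Fin k → S × A) (ω : Traj S A) :
    ω ∈ Cyl (List.ofFn v) ↔ ∀ i : Fin k, ω i = v i := by
  simp [Cyl, Fin.forall_iff]

lemma measurableSet_cyl (pre : List (S × A)) : MeasurableSet (Cyl pre) := by
  have hcoord (i : ℕ) : @Measurable (Traj S A) (S × A) _ ⊤ fun ω => ω i :=
    @measurable_pi_apply ℕ (fun _ => S × A) (fun _ => ⊤) i
  have hcyl : Cyl pre = ⋂ i : Fin pre.length, (fun ω : Traj S A => ω i) ⁻¹' {pre.get i} := by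
    ext ω
    simp [Cyl]
  rw [hcyl]
  exact MeasurableSet.iInter fun i => hcoord i trivial

lemma cyl_disjoint {k : ℕ} {v v' : Fin k → S × A} (hvv : v ≠ v') :
    Disjoint (Cyl (List.ofFn v)) (Cyl (List.ofFn v')) :=
  Set.disjoint_left.2 fun ω hv hv' => hvv <| funext fun i =>
    ((mem_cyl_ofFn v ω).1 hv i).symm.trans ((mem_cyl_ofFn v' ω).1 hv' i)

lemma reachN_eq_biUnion_cyl [Fintype S] [Fintype A] (n : ℕ) (R : Set S)
    [DecidablePred (· ∈ R)] :
    (ReachN n R : Set (Traj S A)) =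
      ⋃ v ∈ Finset.univ.filter (fun v : Fin (n + 1) → S × A => ∃ i, (v i).1 ∈ R),
        Cyl (List.ofFn v) := by
  ext ω
  simp only [ReachN, Set.mem_iUnion, Finset.mem_filter, Finset.mem_univ, true_and, mem_cyl_ofFn]
  constructor
  · rintro ⟨i, hin, hiR⟩
    exact ⟨fun j => ω j, ⟨⟨i, by omega⟩, hiR⟩, fun _ => rfl⟩
  · rintro ⟨v, ⟨i, hiR⟩, hω⟩
    exact ⟨i, by omega, hω i ▸ hiR⟩

end Cylinders

section PathMeasure

open scoped Classical

variable [Fintype S] [Fintype A] [DecidableEq S] {M : MDP S A} (σ : Strategy M)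

lemma sum_cylProb_mul_eq {k : ℕ} (g : (Fin (k + 1) → S × A) → ℝ≥0∞) (h : List (S × A)) (u : S) :
    ∑ v, cylProb M σ h u (List.ofFn v) * g v =
      ∑ a, σ.act h u a * ∑ u', M.trans u a u' *
        ∑ w, cylProb M σ (h ++ [(u, a)]) u' (List.ofFn w) * g (Fin.cons (u, a) w) := by
  rw [Fintype.sum_pi_fin_succ, Fintype.sum_prod_type, Finset.sum_comm]
  refine Finset.sum_congr rfl fun a _ => ?_
  simp only [List.ofFn_succ, Fin.cons_zero, Fin.cons_succ, cylProb, tsum_fintype, ite_mul,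
    zero_mul, Finset.sum_ite_irrel, Finset.sum_const_zero, Finset.sum_ite_eq', Finset.mem_univ,
    if_true, Finset.mul_sum, Finset.sum_mul, mul_assoc]
  exact Finset.sum_comm

lemma sum_cylProb_eq_one : ∀ (k : ℕ) (h : List (S × A)) (u : S),
    ∑ v : Fin k → S × A, cylProb M σ h u (List.ofFn v) = 1
  | 0, h, u => by simp [cylProb]
  | k + 1, h, u => by
    have hsplit := sum_cylProb_mul_eq σ (k := k) (fun _ => 1) h u
    simp only [mul_one, sum_cylProb_eq_one k, PMF.sum_coe_eq_one] at hsplit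
    exact hsplit

lemma sum_cylProb_mul_hit_eq_reachProb (R : Set S) : ∀ (n : ℕ) (h : List (S × A)) (u : S),
    ∑ v : Fin (n + 1) → S × A,
      cylProb M σ h u (List.ofFn v) * (if ∃ i, (v i).1 ∈ R then 1 else 0) =
        reachProb M σ R n h u
  | n, h, u => by
    rw [sum_cylProb_mul_eq]
    by_cases hu : u ∈ R
    · have hhit (a : A) (w : Fin n → S × A) :
          ∃ i, ((Fin.cons (u, a) w : Fin (n + 1) → S × A) i).1 ∈ R := ⟨0, hu⟩
      simp [hhit, sum_cylProb_eq_one, PMF.sum_coe_eq_one, reachProb_of_mem σ hu]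
    cases n with
    | zero => simp [hu, reachProb]
    | succ n =>
      have hhit (a : A) (w : Fin (n + 1) → S × A) :
          (∃ i, ((Fin.cons (u, a) w : Fin (n + 2) → S × A) i).1 ∈ R) ↔ ∃ i, (w i).1 ∈ R := by
        rw [Fin.exists_fin_succ]
        simp only [Fin.cons_zero, Fin.cons_succ, hu, false_or]
      simp only [hhit, sum_cylProb_mul_hit_eq_reachProb R n, reachProb, if_neg hu]

namespace IsPathMeasure

variable {σ} {P : Strategy M → S → Measure (Traj S A)} (hP : IsPathMeasure M P)
include hP

lemma measure_reachN (u : S) (n : ℕ) (R : Set S) :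
    P σ u (ReachN n R) = reachProb M σ R n [] u := by
  rw [reachN_eq_biUnion_cyl, measure_biUnion_finset
    (fun v _ v' _ hvv => cyl_disjoint hvv) (fun v _ => measurableSet_cyl _),
    ← sum_cylProb_mul_hit_eq_reachProb, Finset.sum_filter]
  simp only [mul_boole, hP.2]

lemma measure_reach (u : S) (R : Set S) :
    P σ u (Reach R) = ⨆ n, reachProb M σ R n [] u := by
  have hunion : (Reach R : Set (Traj S A)) = ⋃ n, ReachN n R := by
    ext ω
    simp only [Reach, ReachN, Set.mem_iUnion]
    exact ⟨fun ⟨i, hi⟩ => ⟨i, i, le_rfl, hi⟩, fun ⟨_, i, _, hi⟩ => ⟨i, hi⟩⟩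
  have hmono : Monotone fun n => (ReachN n R : Set (Traj S A)) :=
    fun m n hmn ω ⟨i, him, hiR⟩ => ⟨i, him.trans hmn, hiR⟩
  simp only [hunion, hmono.measure_iUnion, hP.measure_reachN]

end IsPathMeasure

lemma IsEndComponent.pmax_reach_le {P : Strategy M → S → Measure (Traj S A)}
    (hP : IsPathMeasure M P) {T : Set S} {B : Set A} (hEC : IsEndComponent M T B) {s x : S}
    (hs : s ∈ T) (hx : x ∈ T) (u : S) :
    pmax M P u (Reach {s}) ≤ pmax M P u (Reach {x}) := by
  refine iSup_le fun σ => ?_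
  set σ' := switchStrategy σ (ecAction M B) (ecAction_support_subset B) s
  rw [hP.measure_reach]
  refine iSup_le fun n => ?_
  calc reachProb M σ {s} n [] u
      = ⨆ m, reachProb M σ {s} n [] u * chainReachProb M (ecAction M B) {x} m s := by
        rw [← ENNReal.mul_iSup, hEC.iSup_chainReachProb_eq_one hs hx, mul_one]
    _ ≤ ⨆ m, reachProb M σ' {x} (n + m) [] u :=
        iSup_mono fun m => reachProb_mul_chainReachProb_le_switchStrategy σ _ _ s x m n [] u
          List.not_mem_nil
    _ ≤ P σ' u (Reach {x}) := by
        rw [hP.measure_reach]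
        exact iSup_le fun m => le_iSup (fun k => reachProb M σ' {x} k [] u) (n + m)
    _ ≤ pmax M P u (Reach {x}) := le_iSup (fun τ => P τ u (Reach {x})) σ'

end PathMeasure

theorem mec_subset_of_core_general {S A : Type*} [Fintype S] [Fintype A] [DecidableEq S]
    (M : MDP S A) (P : Strategy M → S → Measure (Traj S A)) (hP : IsPathMeasure M P)
    (ε : ℝ) (T : Set S) (B : Set A) (hMEC : IsMEC M T B)
    (s : S) (hs : s ∈ T)
    (hreach : ENNReal.ofReal ε ≤ pmax M P M.init (Reach ({s} : Set S))) :
    ∀ C : Set S, IsCore M P ε C → T ⊆ C := by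
  intro C hC x hx
  by_contra hxC
  have hleave : (Reach {x} : Set (Traj S A)) ⊆ Reach Cᶜ := fun ω ⟨i, hi⟩ =>
    ⟨i, by rw [Set.mem_singleton_iff.1 hi]; exact hxC⟩
  have hcontra : ENNReal.ofReal ε < ENNReal.ofReal ε :=
    calc ENNReal.ofReal ε ≤ pmax M P M.init (Reach {s}) := hreach
      _ ≤ pmax M P M.init (Reach {x}) := hMEC.1.pmax_reach_le hP hs hx M.init
      _ ≤ pmax M P M.init (Reach Cᶜ) := iSup_mono fun σ => measure_mono hleave
      _ < ENNReal.ofReal ε := hC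
  exact lt_irrefl _ hcontra

/-- If `(T, B)` is a maximal end component of the finite MDP `M` and some
state `s ∈ T` satisfies `P^max[Reach {s}] ≥ ε`, then `T ⊆ C` for every `ε`-core `C` of `M`. -/
theorem mec_subset_of_core {S A : Type*} [Fintype S] [Fintype A] [DecidableEq S]
    (M : MDP S A) (P : Strategy M → S → Measure (Traj S A)) (hP : IsPathMeasure M P)
    (ε : ℝ) (hε : 0 < ε) (T : Set S) (B : Set A) (hMEC : IsMEC M T B)
    (s : S) (hs : s ∈ T)
    (hreach : ENNReal.ofReal ε ≤ pmax M P M.init (Reach ({s} : Set S))) :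
    ∀ C : Set S, IsCore M P ε C → T ⊆ C :=
  mec_subset_of_core_general M P hP ε T B hMEC s hs hreach
end

section
/- For every finite MDP M, every state s ∈ S, and every set R ⊆ S: P^max_{s₀}[Reach R] ≥ P^max_{s₀}[Reach {s}] · P^max_s[Reach R]. In particular, if P^max_s[Reach R] = 1 then P^max_{s₀}[Reach R] ≥ P^max_{s₀}[Reach {s}]. -/
open MeasureTheory

variable {S A : Type*}

/-!
Given strategies `σ₁` and `σ₂`, consider the strategy that plays `σ₁` until the first visit to
`s` and then restarts `σ₂`. The event `Reach T` is the disjoint union of the cylinders of its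
first-hit words `l ++ [(u, a)]` (`l` avoids `T`, `u ∈ T`). The cylinders of the words `l ++ w`,
with `l` avoiding `s` and `w` a first-hit word of `R` starting in `s`, are pairwise disjoint
(no one is a prefix of another) and lie in `Reach R`, and under the combined strategy the
probability of `l ++ w` factors as `P^σ₁[l, then s] · P^σ₂_s[w]`. Summing gives
`P^σ₁_{s₀}[Reach {s}] · P^σ₂_s[Reach R] ≤ P_{s₀}[Reach R]` for the combined strategy, and taking
suprema over `σ₁` and `σ₂` gives the theorem.
-/

section Cylinders

lemma mem_Cyl_iff {w : List (S × A)} {ω : Traj S A} :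
    ω ∈ Cyl w ↔ ∀ i (hi : i < w.length), ω i = w[i] :=
  ⟨fun h i hi => h ⟨i, hi⟩, fun h i => h i i.2⟩

lemma measurableSet_Cyl (w : List (S × A)) : MeasurableSet (Cyl w) := by
  have : Cyl w = ⋂ i : Fin w.length, (fun ω : Traj S A => ω i) ⁻¹' {w.get i} := by
    ext; simp [Cyl]
  rw [this]
  exact .iInter fun i =>
    @measurable_pi_apply ℕ (fun _ => S × A) (fun _ => ⊤) i _ MeasurableSpace.measurableSet_top

lemma prefix_of_mem_Cyl {v w : List (S × A)} {ω : Traj S A} (hv : ω ∈ Cyl v) (hw : ω ∈ Cyl w)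
    (hlen : v.length ≤ w.length) : v <+: w := by
  rw [List.prefix_iff_eq_take]
  refine List.ext_getElem (by simpa using hlen) fun i hi _ => ?_
  rw [List.getElem_take, ← mem_Cyl_iff.1 hv i hi, ← mem_Cyl_iff.1 hw]

lemma disjoint_Cyl {v w : List (S × A)} (hvw : ¬ v <+: w) (hwv : ¬ w <+: v) :
    Disjoint (Cyl v) (Cyl w) :=
  Set.disjoint_left.2 fun _ hv hw => (le_total v.length w.length).elim
    (hvw <| prefix_of_mem_Cyl hv hw ·) (hwv <| prefix_of_mem_Cyl hw hv ·)

lemma measure_iUnion_Cyl [DecidableEq S] {M : MDP S A} {P : Strategy M → S → Measure (Traj S A)}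
    (hP : IsPathMeasure M P) (σ : Strategy M) (t : S) {ι : Type*} [Countable ι]
    {w : ι → List (S × A)} (hw : Pairwise fun i j => ¬ w i <+: w j) :
    P σ t (⋃ i, Cyl (w i)) = ∑' i, cylProb M σ [] t (w i) := by
  rw [measure_iUnion (fun i j hij => disjoint_Cyl (hw hij) (hw hij.symm))
    fun i => measurableSet_Cyl _]
  exact tsum_congr fun i => hP.2 σ t (w i)

end Cylinders

section FirstHit

def Avoiding (T : Set S) : Set (List (S × A)) := {l | ∀ q ∈ l, q.1 ∉ T}

lemma eq_of_append_cons_prefix {T : Set S} {l₁ l₂ r₁ r₂ : List (S × A)} {p₁ p₂ : S × A}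
    (hl₁ : l₁ ∈ Avoiding T) (hl₂ : l₂ ∈ Avoiding T) (hp₁ : p₁.1 ∈ T) (hp₂ : p₂.1 ∈ T)
    (h : l₁ ++ p₁ :: r₁ <+: l₂ ++ p₂ :: r₂) : l₁ = l₂ ∧ p₁ = p₂ ∧ r₁ <+: r₂ := by
  induction l₁ generalizing l₂ with
  | nil =>
    cases l₂ with
    | nil => simpa using h
    | cons q l₂ =>
      rw [List.nil_append, List.cons_append, List.cons_prefix_cons] at h
      exact absurd (h.1 ▸ hp₁) (hl₂ q List.mem_cons_self)
  | cons q l₁ ih =>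
    cases l₂ with
    | nil =>
      rw [List.nil_append, List.cons_append, List.cons_prefix_cons] at h
      exact absurd (h.1 ▸ hp₂) (hl₁ q List.mem_cons_self)
    | cons q' l₂ =>
      simp only [List.cons_append, List.cons_prefix_cons] at h
      obtain ⟨rfl, h⟩ := h
      obtain ⟨rfl, hp, hr⟩ :=
        ih (fun x hx => hl₁ x (List.mem_cons_of_mem q hx))
          (fun x hx => hl₂ x (List.mem_cons_of_mem q hx)) h
      exact ⟨rfl, hp, hr⟩

/-- `(l, u, a)` stands for the word `l ++ [(u, a)]`, which enters `T` for the first time at its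
last letter. -/
abbrev FirstHit (T : Set S) (A : Type*) := Avoiding (A := A) T × T × A

variable {T : Set S}

def FirstHit.word (x : FirstHit T A) : List (S × A) := x.1.1 ++ [(x.2.1.1, x.2.2)]

lemma FirstHit.eq_of_word_prefix {x y : FirstHit T A} (h : x.word <+: y.word) : x = y := by
  obtain ⟨hl, hp, -⟩ := eq_of_append_cons_prefix x.1.2 y.1.2 x.2.1.2 y.2.1.2 h
  simp only [Prod.mk.injEq] at hp
  exact Prod.ext (Subtype.ext hl) (Prod.ext (Subtype.ext hp.1) hp.2)

lemma FirstHit.Cyl_append_word_subset (v : List (S × A)) (x : FirstHit T A) :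
    Cyl (v ++ x.word) ⊆ Reach T := by
  intro ω hω
  refine ⟨v.length + x.1.1.length, ?_⟩
  rw [mem_Cyl_iff.1 hω _ (by simp [word])]
  simp [word]

lemma Reach_eq_iUnion_Cyl (T : Set S) :
    (Reach T : Set (Traj S A)) = ⋃ x : FirstHit T A, Cyl x.word := by
  refine subset_antisymm (fun ω ⟨_, hn⟩ => ?_)
    (Set.iUnion_subset (FirstHit.Cyl_append_word_subset []))
  classical
  have hex : ∃ n, (ω n).1 ∈ T := ⟨_, hn⟩
  let n := Nat.find hex
  let x : FirstHit T A := ⟨⟨List.ofFn fun i : Fin n => ω i, by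
      intro q hq
      obtain ⟨i, rfl⟩ := List.mem_ofFn.1 hq
      exact Nat.find_min hex i.2⟩,
    ⟨(ω n).1, Nat.find_spec hex⟩, (ω n).2⟩
  refine Set.mem_iUnion.2 ⟨x, mem_Cyl_iff.2 fun i hi => ?_⟩
  simp only [x, FirstHit.word, List.length_append, List.length_ofFn, List.length_singleton]
    at hi ⊢
  rcases Nat.lt_succ_iff_lt_or_eq.1 hi with hi | rfl
  · simp [List.getElem_append_left, hi]
  · simp

end FirstHit

section PathMeasure

variable [DecidableEq S] {M : MDP S A}

lemma cylProb_cons_of_ne (σ : Strategy M) (h : List (S × A)) {t u : S} (a : A)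
    (r : List (S × A)) (hu : u ≠ t) : cylProb M σ h t ((u, a) :: r) = 0 := by
  simp [cylProb, hu]

lemma tsum_cylProb_singleton (σ : Strategy M) (h : List (S × A)) (t s : S) :
    ∑' a, cylProb M σ h t [(s, a)] = if s = t then 1 else 0 := by
  split_ifs with hs
  · simp [cylProb, hs]
  · simp [cylProb_cons_of_ne _ _ _ _ hs]

variable {P : Strategy M → S → Measure (Traj S A)} [Countable S] [Countable A]

lemma measure_Reach (hP : IsPathMeasure M P) (σ : Strategy M) (t : S) (T : Set S) :
    P σ t (Reach T) = ∑' x : FirstHit T A, cylProb M σ [] t x.word := by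
  rw [Reach_eq_iUnion_Cyl,
    measure_iUnion_Cyl hP σ t fun x y hxy h => hxy (FirstHit.eq_of_word_prefix h)]

lemma measure_Reach_singleton (hP : IsPathMeasure M P) (σ : Strategy M) (t s : S) :
    P σ t (Reach {s}) =
      ∑' l : Avoiding (A := A) {s}, ∑' a, cylProb M σ [] t (l.1 ++ [(s, a)]) := by
  rw [measure_Reach hP, ENNReal.tsum_prod']
  refine tsum_congr fun l => ?_
  rw [ENNReal.tsum_prod']
  exact tsum_singleton s fun u => ∑' a, cylProb M σ [] t (l.1 ++ [(u, a)])

end PathMeasure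

lemma List.dropWhile_append_singleton {α : Type*} {p : α → Bool} {l : List α} {x : α}
    (h : (∃ y ∈ l, p y = false) ∨ p x = false) :
    (l ++ [x]).dropWhile p = l.dropWhile p ++ [x] := by
  rw [List.dropWhile_append]
  split_ifs with hl
  · have hall := List.dropWhile_eq_nil_iff.1 (List.isEmpty_iff.1 hl)
    have hx : p x = false := h.resolve_left fun ⟨y, hy, hpy⟩ => by simp [hall y hy] at hpy
    simp [List.isEmpty_iff.1 hl, List.dropWhile, hx]
  · rfl

section Switch

variable [DecidableEq S] {M : MDP S A}

/-- Play `σ₁` until the first visit to `s`, then restart `σ₂`, showing it only the history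
from that visit on. -/
noncomputable def Strategy.switchAt (σ₁ σ₂ : Strategy M) (s : S) : Strategy M where
  act h t :=
    if (∃ q ∈ h, q.1 = s) ∨ t = s then σ₂.act (h.dropWhile (·.1 ≠ s)) t else σ₁.act h t
  mem_avail h t a ha := by
    split_ifs at ha
    exacts [σ₂.mem_avail _ _ _ ha, σ₁.mem_avail _ _ _ ha]

variable (σ₁ σ₂ : Strategy M) (s : S)

lemma switchAt_act_of_visited {h : List (S × A)} {t : S} (hv : (∃ q ∈ h, q.1 = s) ∨ t = s) :
    (σ₁.switchAt σ₂ s).act h t = σ₂.act (h.dropWhile (·.1 ≠ s)) t :=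
  if_pos hv

lemma cylProb_switchAt_of_visited (w : List (S × A)) :
    ∀ h t, ((∃ q ∈ h, q.1 = s) ∨ t = s) →
      cylProb M (σ₁.switchAt σ₂ s) h t w = cylProb M σ₂ (h.dropWhile (·.1 ≠ s)) t w := by
  induction w with
  | nil => intros; rfl
  | cons p r ih =>
    intro h t hv
    obtain ⟨u, a⟩ := p
    by_cases hut : u = t
    · subst hut
      have hv' : ∃ q ∈ h ++ [(u, a)], q.1 = s := by
        rcases hv with ⟨q, hq, hqs⟩ | hus
        exacts [⟨q, List.mem_append_left _ hq, hqs⟩, ⟨(u, a), by simp, hus⟩]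
      have hdrop : (h ++ [(u, a)]).dropWhile (·.1 ≠ s) = h.dropWhile (·.1 ≠ s) ++ [(u, a)] :=
        List.dropWhile_append_singleton (by simpa using hv)
      simp only [cylProb, if_true]
      rw [switchAt_act_of_visited σ₁ σ₂ s hv]
      simp_rw [ih _ _ (Or.inl hv'), hdrop]
    · rw [cylProb_cons_of_ne _ _ _ _ hut, cylProb_cons_of_ne _ _ _ _ hut]

lemma cylProb_switchAt_append (c : A) (r : List (S × A)) (l : List (S × A))
    (hl : l ∈ Avoiding {s}) : ∀ h ∈ Avoiding {s}, ∀ t,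
      cylProb M (σ₁.switchAt σ₂ s) h t (l ++ (s, c) :: r) =
        (∑' a, cylProb M σ₁ h t (l ++ [(s, a)])) * cylProb M σ₂ [] s ((s, c) :: r) := by
  induction l with
  | nil =>
    intro h hh t
    simp only [List.nil_append]
    rw [tsum_cylProb_singleton]
    split_ifs with hst
    · subst hst
      rw [one_mul, cylProb_switchAt_of_visited _ _ _ _ _ _ (Or.inr rfl),
        List.dropWhile_eq_nil_iff.2 (by simpa [Avoiding] using hh)]
    · rw [zero_mul, cylProb_cons_of_ne _ _ _ _ hst]
  | cons p l ih =>
    intro h hh t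
    obtain ⟨u, b⟩ := p
    by_cases hut : u = t
    · subst hut
      have hus : u ≠ s := hl _ List.mem_cons_self
      have hact : (σ₁.switchAt σ₂ s).act h u = σ₁.act h u :=
        if_neg (by rintro (⟨q, hq, rfl⟩ | rfl); exacts [hh q hq rfl, hus rfl])
      have hh' : h ++ [(u, b)] ∈ Avoiding {s} := fun q hq =>
        (List.mem_append.1 hq).elim (hh q) fun hq => by rw [List.mem_singleton.1 hq]; exact hus
      -- keeps `simp only [cylProb]` from unfolding the `σ₂` factor
      set X := cylProb M σ₂ [] s ((s, c) :: r)
      simp only [List.cons_append, cylProb, if_true, hact]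
      simp_rw [ih (fun q hq => hl q (List.mem_cons_of_mem _ hq)) _ hh']
      simp only [← ENNReal.tsum_mul_left, ← ENNReal.tsum_mul_right, mul_assoc]
      exact ENNReal.tsum_comm
    · simp [cylProb_cons_of_ne _ _ _ _ hut]

end Switch

section Concatenation

variable [DecidableEq S] {M : MDP S A} {P : Strategy M → S → Measure (Traj S A)}
  [Countable S] [Countable A]

theorem measure_Reach_mul_le (hP : IsPathMeasure M P) (σ₁ σ₂ : Strategy M) (t s : S)
    (R : Set S) :
    P σ₁ t (Reach {s}) * P σ₂ s (Reach R) ≤ P (σ₁.switchAt σ₂ s) t (Reach R) := by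
  -- Only first-hit words starting in `s` have positive probability from `s`; for them, `l` is
  -- recovered from `l ++ w` as the part before the first visit to `s`.
  let FromS := {x : FirstHit R A // ∃ c r, x.word = (s, c) :: r}
  have hR : P σ₂ s (Reach R) = ∑' x : FromS, cylProb M σ₂ [] s x.1.word := by
    refine (measure_Reach hP σ₂ s R).trans (tsum_subtype_eq_of_support_subset ?_).symm
    intro x hx
    obtain ⟨⟨u, c⟩, r, hw⟩ := List.exists_cons_of_ne_nil (by simp [FirstHit.word] : x.word ≠ [])
    obtain rfl : u = s := by_contra fun hu => Function.mem_support.1 hx <| by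
      show cylProb M σ₂ [] s x.word = 0
      rw [hw, cylProb_cons_of_ne _ _ _ _ hu]
    exact ⟨c, r, hw⟩
  have hdisj : Pairwise fun i j : Avoiding (A := A) {s} × FromS =>
      ¬ i.1.1 ++ i.2.1.word <+: j.1.1 ++ j.2.1.word := by
    rintro ⟨l₁, x₁, c₁, r₁, hx₁⟩ ⟨l₂, x₂, c₂, r₂, hx₂⟩ hne h
    dsimp only at h
    rw [hx₁, hx₂] at h
    obtain ⟨hl, hc, hr⟩ := eq_of_append_cons_prefix (p₁ := (s, c₁)) (p₂ := (s, c₂))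
      l₁.2 l₂.2 rfl rfl h
    have hx : x₁ = x₂ := FirstHit.eq_of_word_prefix <| by
      rw [hx₁, hx₂, hc]
      exact List.cons_prefix_cons.2 ⟨rfl, hr⟩
    exact hne (Prod.ext (Subtype.ext hl) (Subtype.ext hx))
  calc P σ₁ t (Reach {s}) * P σ₂ s (Reach R)
      = ∑' i : Avoiding (A := A) {s} × FromS,
          cylProb M (σ₁.switchAt σ₂ s) [] t (i.1.1 ++ i.2.1.word) := by
        rw [measure_Reach_singleton hP, hR, ← ENNReal.tsum_mul_right, ENNReal.tsum_prod']
        refine tsum_congr fun l => ?_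
        rw [← ENNReal.tsum_mul_left]
        refine tsum_congr fun ⟨x, c, r, hx⟩ => ?_
        dsimp only
        rw [hx, cylProb_switchAt_append σ₁ σ₂ s c r l.1 l.2 [] (by simp [Avoiding])]
    _ = P (σ₁.switchAt σ₂ s) t
          (⋃ i : Avoiding (A := A) {s} × FromS, Cyl (i.1.1 ++ i.2.1.word)) :=
        (measure_iUnion_Cyl hP _ t hdisj).symm
    _ ≤ P (σ₁.switchAt σ₂ s) t (Reach R) :=
        measure_mono (Set.iUnion_subset fun i => FirstHit.Cyl_append_word_subset _ _)

end Concatenation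

/-- For every finite MDP `M`, state `s` and set `R ⊆ S`:
`P^max_{s₀}[Reach R] ≥ P^max_{s₀}[Reach {s}] · P^max_s[Reach R]`; in particular, if
`P^max_s[Reach R] = 1` then `P^max_{s₀}[Reach R] ≥ P^max_{s₀}[Reach {s}]`. -/
theorem pmax_reach_mul_le {S A : Type*} [Fintype S] [Fintype A] [DecidableEq S]
    (M : MDP S A) (P : Strategy M → S → Measure (Traj S A)) (hP : IsPathMeasure M P)
    (s : S) (R : Set S) :
    pmax M P M.init (Reach ({s} : Set S)) * pmax M P s (Reach R) ≤
        pmax M P M.init (Reach R) ∧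
      (pmax M P s (Reach R) = 1 →
        pmax M P M.init (Reach ({s} : Set S)) ≤ pmax M P M.init (Reach R)) := by
  have hmul : pmax M P M.init (Reach ({s} : Set S)) * pmax M P s (Reach R) ≤
      pmax M P M.init (Reach R) := by
    simp only [pmax, ENNReal.iSup_mul, ENNReal.mul_iSup]
    exact iSup₂_le fun σ₂ σ₁ =>
      (measure_Reach_mul_le hP σ₁ σ₂ M.init s R).trans (le_iSup (fun σ => P σ M.init (Reach R)) _)
  exact ⟨hmul, fun h => by simpa [h] using hmul⟩
end

section
/- Let M be a finite MDP, ε > 0, and n ∈ ℕ. A set C ⊆ S is an n-step ε-core of M if and only if for every subset of states R ⊆ S it holds that 0 ≤ P^max[Reach≤n R] − P^max[Reach≤n (R ∩ C) ∩ Stay≤n C] < ε. -/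
open MeasureTheory

variable {S A : Type*}

/-- A set `C ⊆ S` is an `n`-step `ε`-core of the finite MDP `M` if and only
if for every subset of states `R ⊆ S` we have
`0 ≤ P^max[Reach≤n R] − P^max[Reach≤n (R ∩ C) ∩ Stay≤n C] < ε`. -/
theorem finite_core_characterization {S A : Type*} [Fintype S] [Fintype A] [DecidableEq S]
    (M : MDP S A) (ε : ℝ) (hε : 0 < ε) (n : ℕ)
    (P : Strategy M → S → Measure (Traj S A)) (hP : IsPathMeasure M P) (C : Set S) :
    IsNCore M P n ε C ↔
      ∀ R : Set S,
        0 ≤ (pmax M P M.init (ReachN n R)).toReal -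
              (pmax M P M.init (ReachN n (R ∩ C) ∩ StayN n C)).toReal ∧
          (pmax M P M.init (ReachN n R)).toReal -
              (pmax M P M.init (ReachN n (R ∩ C) ∩ StayN n C)).toReal < ε := by

  have key : ∀ E : Set (Traj S A), pmax M P M.init E ≤ 1 := by
    intro E
    refine iSup_le fun σ => ?_
    haveI := hP.1 σ M.init
    exact prob_le_one
  constructor
  · intro hcore R
    set a := pmax M P M.init (ReachN n R) with ha
    set b := pmax M P M.init (ReachN n (R ∩ C) ∩ StayN n C) with hb
    set c := pmax M P M.init (ReachN n Cᶜ) with hc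
    have hsub : (ReachN n (R ∩ C) ∩ StayN n C : Set (Traj S A)) ⊆ ReachN n R := by
      rintro ω ⟨⟨i, hin, hmem⟩, _⟩
      exact ⟨i, hin, hmem.1⟩
    have hba : b ≤ a := iSup_mono fun σ => measure_mono hsub
    have hcover : (ReachN n R : Set (Traj S A)) ⊆
        (ReachN n (R ∩ C) ∩ StayN n C) ∪ ReachN n Cᶜ := by
      rintro ω ⟨i, hin, hmem⟩
      by_cases hC : ∀ j ≤ n, (ω j).1 ∈ C
      · exact Or.inl ⟨⟨i, hin, hmem, hC i hin⟩, hC⟩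
      · push_neg at hC
        obtain ⟨j, hjn, hj⟩ := hC
        exact Or.inr ⟨j, hjn, hj⟩
    have habc : a ≤ b + c := by
      refine iSup_le fun σ => ?_
      calc P σ M.init (ReachN n R)
          ≤ P σ M.init ((ReachN n (R ∩ C) ∩ StayN n C) ∪ ReachN n Cᶜ) :=
            measure_mono hcover
        _ ≤ P σ M.init (ReachN n (R ∩ C) ∩ StayN n C) + P σ M.init (ReachN n Cᶜ) :=
            measure_union_le _ _
        _ ≤ b + c := add_le_add (le_iSup (fun σ => P σ M.init _) σ)
            (le_iSup (fun σ => P σ M.init _) σ)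
    have haf : a ≠ ⊤ := (lt_of_le_of_lt (key _) ENNReal.one_lt_top).ne
    have hbf : b ≠ ⊤ := (lt_of_le_of_lt (key _) ENNReal.one_lt_top).ne
    have hcf : c ≠ ⊤ := (lt_of_le_of_lt (key _) ENNReal.one_lt_top).ne
    have hct : c.toReal < ε := by
      have := ENNReal.toReal_lt_toReal hcf ENNReal.ofReal_ne_top |>.mpr hcore
      rwa [ENNReal.toReal_ofReal hε.le] at this
    constructor
    · have := ENNReal.toReal_le_toReal hbf haf |>.mpr hba
      linarith
    · have h1 : a.toReal ≤ b.toReal + c.toReal := by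
        have := ENNReal.toReal_le_toReal haf (by simp [hbf, hcf]) |>.mpr habc
        rwa [ENNReal.toReal_add hbf hcf] at this
      linarith
  · intro h
    have h1 := h Cᶜ
    have hempty : (ReachN n (Cᶜ ∩ C) ∩ StayN n C : Set (Traj S A)) = ∅ := by
      ext ω
      simp only [Set.mem_inter_iff, Set.mem_empty_iff_false, iff_false]
      rintro ⟨⟨i, hin, hmem⟩, _⟩
      exact hmem.1 hmem.2
    have hzero : pmax M P M.init (ReachN n (Cᶜ ∩ C) ∩ StayN n C) = 0 := by
      rw [hempty]
      simp [pmax]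
    rw [hzero] at h1
    simp only [ENNReal.toReal_zero, sub_zero] at h1
    have haf : pmax M P M.init (ReachN n Cᶜ) ≠ ⊤ :=
      (lt_of_le_of_lt (key _) ENNReal.one_lt_top).ne
    exact (ENNReal.lt_ofReal_iff_toReal_lt haf).mpr h1.2
end
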